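/- arXiv:1501.04287 — 11 statements merged into one kernel-verified Lean document; each statement's English description precedes it below -/
import Mathlib

section
/- Let s : ℕ → ℕ with s(n) ≥ 1 for all n, and let A be a bounded linear operator on the complex Hilbert space ℓ²(Σ n, Fin s(n)) such that for every square-summable ψ and every index i: (Aψ)(0,i) = (s(0)·s(1))^{-1/2} · ∑_{j < s(1)} ψ(1,j), and for every n, (Aψ)(n+1,i) = (s(n+1)·s(n+2))^{-1/2} · ∑_{j < s(n+2)} ψ(n+2,j) + (s(n+1)·s(n))^{-1/2} · ∑_{j < s(n)} ψ(n,j). Then the spectrum of A (in the algebra of bounded operators) equals the real interval [−2, 2], viewed as a subset of ℂ. -/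
open scoped ComplexConjugate InnerProductSpace
open Finset

/-!
Write `u n` for the unit vector of `ℓ²(Σ n, Fin (s n))` that is constant on shell `n`, and `U` for
the isometry `ℓ²(ℕ) → ℓ²(Σ n, Fin (s n))` sending `e n` to `u n`. The hypotheses say exactly that
`A = U J U*`, where `J` is the free Jacobi matrix `(J f) n = f (n + 1) + f (n - 1)` (adjacency
operator of the half-line). Hence `A` is self-adjoint with `‖A‖ ≤ 2`, and its spectrum lies in
`[-2, 2]`.

Conversely, for `x = 2 cos θ ∈ (-2, 2)` the sequence `sin ((n + 1) θ)` solves `J f = x f` exactly,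
including the boundary equation at `n = 0`. Its truncations to `[0, 2M)`, transported by `U`, have
squared norm at least `M (1 - |cos θ|)` while `(x - A)` of them has squared norm at most `32`, so
`x - A` is not bounded below. Thus `(-2, 2)` lies in the spectrum, which is closed.
-/

noncomputable section

theorem hasSum_of_eq_add_succ {E : Type*} [AddCommGroup E] [TopologicalSpace E]
    [IsTopologicalAddGroup E] {u a b : ℕ → E} {α β : E} (ha : HasSum a α) (hb : HasSum b β)
    (h0 : u 0 = a 0) (hsucc : ∀ n, u (n + 1) = a (n + 1) + b n) : HasSum u (α + β) := by
  rw [← hasSum_nat_add_iff' 1]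
  have := ((hasSum_nat_add_iff' 1).2 ha).add hb
  simp only [range_one, sum_singleton, ← hsucc, h0] at this ⊢
  convert this using 1
  abel

theorem summable_inner_of_summable_norm_sq {𝕜 E : Type*} [RCLike 𝕜] [NormedAddCommGroup E]
    [InnerProductSpace 𝕜 E] {f g : ℕ → E} (hf : Summable fun n => ‖f n‖ ^ 2)
    (hg : Summable fun n => ‖g n‖ ^ 2) : Summable fun n => ⟪f n, g n⟫_𝕜 := by
  refine Summable.of_norm_bounded ((hf.add hg).div_const 2) fun n => ?_
  have := norm_inner_le_norm (𝕜 := 𝕜) (f n) (g n)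
  nlinarith [sq_nonneg (‖f n‖ - ‖g n‖)]

theorem lp.hasSum_sum_norm_sq_sigma {ι : Type*} {β : ι → Type*} [∀ i, Fintype (β i)]
    {E : Type*} [NormedAddCommGroup E] (ψ : lp (fun _ : (Σ i, β i) => E) 2) :
    HasSum (fun i => ∑ j, ‖ψ ⟨i, j⟩‖ ^ 2) (‖ψ‖ ^ 2) := by
  have h := lp.hasSum_norm (by norm_num : 0 < (2 : ENNReal).toReal) ψ
  simp only [ENNReal.toReal_ofNat, Real.rpow_two] at h
  exact h.sigma fun _ => hasSum_fintype _

theorem lp.inner_sigma_eq_tsum_sum {ι : Type*} {β : ι → Type*} [∀ i, Fintype (β i)]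
    {𝕜 E : Type*} [RCLike 𝕜] [NormedAddCommGroup E] [InnerProductSpace 𝕜 E]
    (χ φ : lp (fun _ : (Σ i, β i) => E) 2) :
    ⟪χ, φ⟫_𝕜 = ∑' i, ∑ j, ⟪χ ⟨i, j⟩, φ ⟨i, j⟩⟫_𝕜 := by
  rw [lp.inner_eq_tsum, (lp.summable_inner χ φ).tsum_sigma' fun _ => .of_finite]
  exact tsum_congr fun i => tsum_fintype _

theorem mem_spectrum_of_forall_exists_norm_lt {𝕜 E : Type*} [NontriviallyNormedField 𝕜]
    [NormedAddCommGroup E] [NormedSpace 𝕜 E] {T : E →L[𝕜] E} {z : 𝕜}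
    (h : ∀ C > 0, ∃ v, C * ‖z • v - T v‖ < ‖v‖) : z ∈ spectrum 𝕜 T := by
  rintro ⟨u, hu⟩
  obtain ⟨v, hv⟩ := h (‖(↑u⁻¹ : E →L[𝕜] E)‖ + 1) (by positivity)
  have hinv : (↑u⁻¹ : E →L[𝕜] E) (z • v - T v) = v := by
    have h1 : ((↑u⁻¹ * ↑u : E →L[𝕜] E)) v = v := by rw [u.inv_mul]; rfl
    simpa [hu, Algebra.algebraMap_eq_smul_one] using h1
  have := (↑u⁻¹ : E →L[𝕜] E).le_opNorm (z • v - T v)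
  rw [hinv] at this
  nlinarith [norm_nonneg (z • v - T v)]

theorem IsSelfAdjoint.spectrum_subset_image_Icc {A : Type*} [CStarAlgebra A] {a : A}
    (ha : IsSelfAdjoint a) : spectrum ℂ a ⊆ (↑) '' Set.Icc (-‖a‖) ‖a‖ := by
  intro z hz
  have : Nontrivial A := by
    by_contra h
    rw [not_nontrivial_iff_subsingleton] at h
    simp [spectrum.of_subsingleton] at hz
  have hnorm := spectrum.norm_le_norm_of_mem hz
  rw [ha.mem_spectrum_eq_re hz, Complex.norm_real, Real.norm_eq_abs] at hnorm
  exact ⟨z.re, abs_le.1 hnorm, (ha.mem_spectrum_eq_re hz).symm⟩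

theorem one_sub_abs_cos_le_sin_sq_add_sin_sq (a θ : ℝ) :
    1 - |Real.cos θ| ≤ Real.sin a ^ 2 + Real.sin (a + θ) ^ 2 := by
  have hcos :
      Real.cos (2 * a) + Real.cos (2 * (a + θ)) = 2 * Real.cos θ * Real.cos (2 * a + θ) := by
    have h1 := Real.cos_sub (2 * a + θ) θ
    have h2 := Real.cos_add (2 * a + θ) θ
    rw [show 2 * a + θ - θ = 2 * a by ring] at h1
    rw [show 2 * a + θ + θ = 2 * (a + θ) by ring] at h2
    linarith
  have hle : Real.cos θ * Real.cos (2 * a + θ) ≤ |Real.cos θ| := by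
    calc Real.cos θ * Real.cos (2 * a + θ) ≤ |Real.cos θ * Real.cos (2 * a + θ)| := le_abs_self _
      _ ≤ |Real.cos θ| := by
        rw [abs_mul]; exact mul_le_of_le_one_right (abs_nonneg _) (Real.abs_cos_le_one _)
  rw [Real.sin_sq_eq_half_sub, Real.sin_sq_eq_half_sub]
  linarith

theorem mul_one_sub_abs_cos_le_sum_sin_sq (θ : ℝ) (M : ℕ) :
    M * (1 - |Real.cos θ|) ≤ ∑ n ∈ range (2 * M), Real.sin ((n + 1) * θ) ^ 2 := by
  induction M with
  | zero => simp
  | succ M ih =>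
    rw [show 2 * (M + 1) = 2 * M + 1 + 1 by ring, sum_range_succ, sum_range_succ]
    have := one_sub_abs_cos_le_sin_sq_add_sin_sq ((2 * M + 1) * θ) θ
    push_cast at this ⊢
    rw [show ((2 * M + 1 : ℝ) + 1) * θ = (2 * M + 1) * θ + θ by ring]
    linarith

namespace Antitree

def jacobi {M : Type*} [Add M] (f : ℕ → M) : ℕ → M
  | 0 => f 1
  | n + 1 => f (n + 2) + f n

section Jacobi

variable {𝕜 E F : Type*} [RCLike 𝕜] [NormedAddCommGroup E] [InnerProductSpace 𝕜 E]
  [SeminormedAddCommGroup F]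

theorem tsum_inner_jacobi_left {f g : ℕ → E} (hf : Summable fun n => ‖f n‖ ^ 2)
    (hg : Summable fun n => ‖g n‖ ^ 2) :
    ∑' n, ⟪jacobi f n, g n⟫_𝕜 = ∑' n, ⟪f n, jacobi g n⟫_𝕜 := by
  have hf1 : Summable fun n => ‖f (n + 1)‖ ^ 2 := (summable_nat_add_iff 1).2 hf
  have hg1 : Summable fun n => ‖g (n + 1)‖ ^ 2 := (summable_nat_add_iff 1).2 hg
  have ha := (summable_inner_of_summable_norm_sq (𝕜 := 𝕜) hf1 hg).hasSum
  have hb := (summable_inner_of_summable_norm_sq (𝕜 := 𝕜) hf hg1).hasSum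
  have hl : HasSum (fun n => ⟪jacobi f n, g n⟫_𝕜) _ :=
    hasSum_of_eq_add_succ ha hb rfl fun n => inner_add_left (f (n + 2)) (f n) (g (n + 1))
  have hr : HasSum (fun n => ⟪f n, jacobi g n⟫_𝕜) _ :=
    hasSum_of_eq_add_succ hb ha rfl fun n => inner_add_right (f (n + 1)) (g (n + 2)) (g n)
  rw [hl.tsum_eq, hr.tsum_eq, add_comm]

theorem norm_jacobi_succ_sq_le (f : ℕ → F) (n : ℕ) :
    ‖jacobi f (n + 1)‖ ^ 2 ≤ 2 * (‖f (n + 2)‖ ^ 2 + ‖f n‖ ^ 2) := by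
  have : ‖jacobi f (n + 1)‖ ≤ ‖f (n + 2)‖ + ‖f n‖ := norm_add_le _ _
  nlinarith [sq_nonneg (‖f (n + 2)‖ - ‖f n‖), norm_nonneg (jacobi f (n + 1))]

theorem summable_norm_jacobi_sq {f : ℕ → F} (hf : Summable fun n => ‖f n‖ ^ 2) :
    Summable fun n => ‖jacobi f n‖ ^ 2 :=
  (summable_nat_add_iff 1).1 <| .of_nonneg_of_le (fun _ => sq_nonneg _)
    (norm_jacobi_succ_sq_le f) ((((summable_nat_add_iff 2).2 hf).add hf).mul_left 2)

theorem tsum_norm_jacobi_sq_le {f : ℕ → F} (hf : Summable fun n => ‖f n‖ ^ 2) :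
    ∑' n, ‖jacobi f n‖ ^ 2 ≤ 4 * ∑' n, ‖f n‖ ^ 2 := by
  have h2 := (summable_nat_add_iff 2).2 hf
  have hsplit := hf.sum_add_tsum_nat_add 2
  rw [(summable_norm_jacobi_sq hf).tsum_eq_zero_add]
  have : ∑' n, ‖jacobi f (n + 1)‖ ^ 2 ≤ 2 * (∑' n, ‖f (n + 2)‖ ^ 2 + ∑' n, ‖f n‖ ^ 2) := by
    rw [← h2.tsum_add hf, ← tsum_mul_left]
    exact ((summable_nat_add_iff 1).2 (summable_norm_jacobi_sq hf)).tsum_le_tsum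
      (norm_jacobi_succ_sq_le f) ((h2.add hf).mul_left 2)
  simp only [sum_range_succ, range_zero, sum_empty, zero_add] at hsplit
  change ‖f 1‖ ^ 2 + _ ≤ _
  nlinarith [sq_nonneg ‖f 0‖, sq_nonneg ‖f 1‖]

theorem norm_jacobi_le {f : ℕ → F} (hf : ∀ n, ‖f n‖ ≤ 1) (n : ℕ) : ‖jacobi f n‖ ≤ 2 := by
  cases n with
  | zero => exact (hf 1).trans one_le_two
  | succ n => exact (norm_add_le _ _).trans (by linarith [hf (n + 2), hf n])

end Jacobi

local notation "ℓ²[" s "]" => lp (fun _ : (Σ n : ℕ, Fin (s n)) => ℂ) 2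

def truncSin (θ : ℝ) (K : ℕ) (n : ℕ) : ℂ := if n < K then (Real.sin ((n + 1) * θ) : ℂ) else 0

section TruncSin

variable (θ : ℝ) (K : ℕ)

theorem norm_truncSin_le (n : ℕ) : ‖truncSin θ K n‖ ≤ 1 := by
  unfold truncSin
  split_ifs
  · rw [Complex.norm_real, Real.norm_eq_abs]; exact Real.abs_sin_le_one _
  · simp

theorem summable_norm_truncSin_sq : Summable fun n => ‖truncSin θ K n‖ ^ 2 :=
  summable_of_ne_finset_zero (s := range K) fun n hn => by
    simp [truncSin, not_lt.1 (mt mem_range.2 hn)]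

theorem jacobi_truncSin {n : ℕ} (hn : n + 2 ≤ K) :
    jacobi (truncSin θ K) n = 2 * Real.cos θ * truncSin θ K n := by
  cases n with
  | zero =>
    simp only [jacobi, truncSin, if_pos (by omega : 1 < K), if_pos (by omega : 0 < K)]
    push_cast
    rw [zero_add, one_mul, one_add_one_eq_two, Complex.sin_two_mul]
    ring
  | succ n =>
    simp only [jacobi, truncSin, if_pos (by omega : n + 2 < K), if_pos (by omega : n < K),
      if_pos (by omega : n + 1 < K)]
    push_cast
    rw [show ((n : ℂ) + 2 + 1) * θ = (n + 1 + 1) * θ + θ by ring,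
      show ((n : ℂ) + 1) * θ = (n + 1 + 1) * θ - θ by ring, Complex.sin_add, Complex.sin_sub]
    ring

theorem tsum_norm_truncSin_sq_ge (M : ℕ) :
    M * (1 - |Real.cos θ|) ≤ ∑' n, ‖truncSin θ (2 * M) n‖ ^ 2 := by
  rw [tsum_eq_sum (s := range (2 * M)) fun n hn => by
    simp [truncSin, not_lt.1 (mt mem_range.2 hn)]]
  refine (mul_one_sub_abs_cos_le_sum_sin_sq θ M).trans_eq (sum_congr rfl fun n hn => ?_)
  rw [truncSin, if_pos (mem_range.1 hn), Complex.norm_real, Real.norm_eq_abs, sq_abs]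

theorem mul_truncSin_sub_jacobi_eq_zero {n : ℕ} (hn : n ∉ ({K - 1, K} : Finset ℕ)) :
    2 * Real.cos θ * truncSin θ K n - jacobi (truncSin θ K) n = 0 := by
  simp only [mem_insert, mem_singleton, not_or] at hn
  rcases Nat.lt_or_ge (n + 1) K with h | h
  · rw [jacobi_truncSin θ K (by omega), sub_self]
  · obtain ⟨m, rfl⟩ : ∃ m, n = m + 1 := ⟨n - 1, by omega⟩
    simp only [jacobi, truncSin, if_neg (show ¬ m + 1 < K by omega),
      if_neg (show ¬ m + 2 < K by omega), if_neg (show ¬ m < K by omega)]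
    simp

theorem norm_mul_truncSin_sub_jacobi_le (n : ℕ) :
    ‖2 * Real.cos θ * truncSin θ K n - jacobi (truncSin θ K) n‖ ≤ 4 := by
  have h1 : ‖2 * (Real.cos θ : ℂ) * truncSin θ K n‖ ≤ 2 := by
    rw [norm_mul, norm_mul, Complex.norm_real, Real.norm_eq_abs, Complex.norm_two]
    nlinarith [Real.abs_cos_le_one θ, norm_truncSin_le θ K n, abs_nonneg (Real.cos θ)]
  have h2 := norm_jacobi_le (norm_truncSin_le θ K) n
  linarith [norm_sub_le (2 * (Real.cos θ : ℂ) * truncSin θ K n) (jacobi (truncSin θ K) n)]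

theorem tsum_norm_mul_truncSin_sub_jacobi_sq_le :
    ∑' n, ‖2 * Real.cos θ * truncSin θ K n - jacobi (truncSin θ K) n‖ ^ 2 ≤ 32 := by
  rw [tsum_eq_sum fun n hn => by rw [mul_truncSin_sub_jacobi_eq_zero θ K hn, norm_zero,
    zero_pow two_ne_zero]]
  calc _ ≤ ({K - 1, K} : Finset ℕ).card • (4 : ℝ) ^ 2 :=
        sum_le_card_nsmul _ _ _ fun n _ =>
          pow_le_pow_left₀ (norm_nonneg _) (norm_mul_truncSin_sub_jacobi_le θ K n) 2
    _ ≤ 2 • (4 : ℝ) ^ 2 := by gcongr; exact card_le_two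
    _ = 32 := by norm_num

end TruncSin

section Radial

variable (s : ℕ → ℕ)

/-- `radial s f = U f` and `radialCoeff s ψ = U* ψ`; on an empty shell the weight `(√0)⁻¹` is
`0`. -/
def radial (f : ℕ → ℂ) (x : Σ n, Fin (s n)) : ℂ := (√(s x.1 : ℝ) : ℂ)⁻¹ * f x.1

def radialCoeff (ψ : (Σ n, Fin (s n)) → ℂ) (n : ℕ) : ℂ :=
  (√(s n : ℝ) : ℂ)⁻¹ * ∑ j, ψ ⟨n, j⟩

variable {s}

theorem norm_sqrt_inv_sq (k : ℕ) : ‖(√(k : ℝ) : ℂ)⁻¹‖ ^ 2 = (k : ℝ)⁻¹ := by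
  rw [norm_inv, Complex.norm_real, Real.norm_of_nonneg (Real.sqrt_nonneg _), inv_pow,
    Real.sq_sqrt k.cast_nonneg]

theorem sum_norm_radial_sq {n : ℕ} (hn : 0 < s n) (f : ℕ → ℂ) :
    ∑ j : Fin (s n), ‖radial s f ⟨n, j⟩‖ ^ 2 = ‖f n‖ ^ 2 := by
  simp only [radial, norm_mul, mul_pow, norm_sqrt_inv_sq, sum_const, card_univ,
    Fintype.card_fin, nsmul_eq_mul]
  field_simp

theorem norm_radialCoeff_sq_le (ψ : (Σ n, Fin (s n)) → ℂ) (n : ℕ) :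
    ‖radialCoeff s ψ n‖ ^ 2 ≤ ∑ j, ‖ψ ⟨n, j⟩‖ ^ 2 := by
  have hcs : ‖∑ j, ψ ⟨n, j⟩‖ ^ 2 ≤ s n * ∑ j, ‖ψ ⟨n, j⟩‖ ^ 2 := by
    refine (pow_le_pow_left₀ (norm_nonneg _) (norm_sum_le _ _) 2).trans ?_
    simpa using sq_sum_le_card_mul_sum_sq (s := univ) (f := fun j => ‖ψ ⟨n, j⟩‖)
  have hs : (s n : ℝ)⁻¹ * s n ≤ 1 := by
    rcases (s n).eq_zero_or_pos with h | h
    · simp [h]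
    · rw [inv_mul_cancel₀ (by positivity)]
  rw [radialCoeff, norm_mul, mul_pow, norm_sqrt_inv_sq]
  calc (s n : ℝ)⁻¹ * ‖∑ j, ψ ⟨n, j⟩‖ ^ 2 ≤ (s n : ℝ)⁻¹ * (s n * ∑ j, ‖ψ ⟨n, j⟩‖ ^ 2) := by
        gcongr
    _ ≤ ∑ j, ‖ψ ⟨n, j⟩‖ ^ 2 := by
        rw [← mul_assoc]
        exact mul_le_of_le_one_left (sum_nonneg fun _ _ => sq_nonneg _) hs

theorem radialCoeff_radial {n : ℕ} (hn : 0 < s n) (f : ℕ → ℂ) :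
    radialCoeff s (radial s f) n = f n := by
  have : (√(s n : ℝ) : ℂ) ≠ 0 := by exact_mod_cast (Real.sqrt_pos.2 (by exact_mod_cast hn)).ne'
  have hsq : (√(s n : ℝ) : ℂ) ^ 2 = s n := by
    rw [← Complex.ofReal_pow, Real.sq_sqrt (Nat.cast_nonneg _), Complex.ofReal_natCast]
  simp only [radialCoeff, radial, sum_const, card_univ, Fintype.card_fin, nsmul_eq_mul]
  rw [← hsq]
  field_simp

theorem inner_eq_tsum_of_coe_eq_radial {χ : ℓ²[s]} {f : ℕ → ℂ} (hχ : ⇑χ = radial s f)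
    (φ : ℓ²[s]) : ⟪χ, φ⟫_ℂ = ∑' n, ⟪f n, radialCoeff s φ n⟫_ℂ := by
  rw [lp.inner_sigma_eq_tsum_sum, hχ]
  refine tsum_congr fun n => ?_
  simp only [radial, radialCoeff, RCLike.inner_apply', map_mul, map_inv₀, Complex.conj_ofReal,
    mul_sum]
  ring_nf

theorem norm_sq_eq_tsum_of_coe_eq_radial (hs : ∀ n, 0 < s n) {χ : ℓ²[s]} {f : ℕ → ℂ}
    (hχ : ⇑χ = radial s f) : ‖χ‖ ^ 2 = ∑' n, ‖f n‖ ^ 2 := by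
  rw [(lp.hasSum_sum_norm_sq_sigma χ).tsum_eq.symm, hχ]
  exact tsum_congr fun n => sum_norm_radial_sq (hs n) f

theorem memℓp_radial (hs : ∀ n, 0 < s n) {f : ℕ → ℂ} (hf : Summable fun n => ‖f n‖ ^ 2) :
    Memℓp (radial s f) 2 := by
  refine memℓp_gen ?_
  simp only [ENNReal.toReal_ofNat, Real.rpow_two]
  refine (summable_sigma_of_nonneg fun _ => sq_nonneg _).2 ⟨fun _ => .of_finite, ?_⟩
  simpa only [tsum_fintype, sum_norm_radial_sq (hs _)] using hf

theorem summable_norm_radialCoeff_sq (ψ : ℓ²[s]) :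
    Summable fun n => ‖radialCoeff s ψ n‖ ^ 2 :=
  (lp.hasSum_sum_norm_sq_sigma ψ).summable.of_nonneg_of_le (fun _ => sq_nonneg _)
    (norm_radialCoeff_sq_le ψ)

theorem tsum_norm_radialCoeff_sq_le (ψ : ℓ²[s]) :
    ∑' n, ‖radialCoeff s ψ n‖ ^ 2 ≤ ‖ψ‖ ^ 2 :=
  hasSum_le (norm_radialCoeff_sq_le ψ) (summable_norm_radialCoeff_sq ψ).hasSum
    (lp.hasSum_sum_norm_sq_sigma ψ)

end Radial

def IsAntitreeAdjacency (s : ℕ → ℕ) (A : ℓ²[s] →L[ℂ] ℓ²[s]) : Prop :=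
  ∀ ψ, ⇑(A ψ) = radial s (jacobi (radialCoeff s ψ))

namespace IsAntitreeAdjacency

variable {s : ℕ → ℕ} {A : ℓ²[s] →L[ℂ] ℓ²[s]}

theorem isSelfAdjoint (hA : IsAntitreeAdjacency s A) : IsSelfAdjoint A := by
  refine ContinuousLinearMap.isSelfAdjoint_iff_isSymmetric.2 fun ψ φ => ?_
  have hψ := summable_norm_radialCoeff_sq ψ
  have hφ := summable_norm_radialCoeff_sq φ
  calc ⟪A ψ, φ⟫_ℂ = ∑' n, ⟪jacobi (radialCoeff s ψ) n, radialCoeff s φ n⟫_ℂ :=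
        inner_eq_tsum_of_coe_eq_radial (hA ψ) φ
    _ = ∑' n, ⟪radialCoeff s ψ n, jacobi (radialCoeff s φ) n⟫_ℂ := tsum_inner_jacobi_left hψ hφ
    _ = conj (∑' n, ⟪jacobi (radialCoeff s φ) n, radialCoeff s ψ n⟫_ℂ) := by
        simp only [Complex.conj_tsum, inner_conj_symm]
    _ = ⟪ψ, A φ⟫_ℂ := by rw [← inner_eq_tsum_of_coe_eq_radial (hA φ) ψ, inner_conj_symm]

theorem norm_le_two (hA : IsAntitreeAdjacency s A) (hs : ∀ n, 0 < s n) : ‖A‖ ≤ 2 := by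
  refine A.opNorm_le_bound zero_le_two fun ψ => ?_
  refine le_of_sq_le_sq ?_ (by positivity)
  have hψ := summable_norm_radialCoeff_sq ψ
  calc ‖A ψ‖ ^ 2 = ∑' n, ‖jacobi (radialCoeff s ψ) n‖ ^ 2 :=
        norm_sq_eq_tsum_of_coe_eq_radial hs (hA ψ)
    _ ≤ 4 * ∑' n, ‖radialCoeff s ψ n‖ ^ 2 := tsum_norm_jacobi_sq_le hψ
    _ ≤ 4 * ‖ψ‖ ^ 2 := by gcongr; exact tsum_norm_radialCoeff_sq_le ψ
    _ = (2 * ‖ψ‖) ^ 2 := by ring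

theorem coe_smul_sub_apply_eq_radial (hA : IsAntitreeAdjacency s A) (hs : ∀ n, 0 < s n)
    (z : ℂ) {χ : ℓ²[s]} {f : ℕ → ℂ} (hχ : ⇑χ = radial s f) :
    ⇑(z • χ - A χ) = radial s (fun n => z * f n - jacobi f n) := by
  have hf : radialCoeff s χ = f := funext fun n => hχ ▸ radialCoeff_radial (hs n) f
  ext x
  simp only [lp.coeFn_sub, lp.coeFn_smul, Pi.sub_apply, Pi.smul_apply, hA χ, hf]
  rw [hχ]
  simp only [radial, smul_eq_mul]
  ring

theorem spectrum_subset (hA : IsAntitreeAdjacency s A) (hs : ∀ n, 0 < s n) :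
    spectrum ℂ A ⊆ (↑) '' Set.Icc (-2 : ℝ) 2 := by
  have h2 := hA.norm_le_two hs
  refine hA.isSelfAdjoint.spectrum_subset_image_Icc.trans ?_
  exact Set.image_mono (Set.Icc_subset_Icc (neg_le_neg h2) h2)

theorem ofReal_mem_spectrum (hA : IsAntitreeAdjacency s A) (hs : ∀ n, 0 < s n) {x : ℝ}
    (hx : x ∈ Set.Ioo (-2 : ℝ) 2) : (x : ℂ) ∈ spectrum ℂ A := by
  set θ := Real.arccos (x / 2)
  have hcos : 2 * Real.cos θ = x := by
    rw [Real.cos_arccos (by linarith [hx.1]) (by linarith [hx.2])]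
    ring
  have hε : 0 < 1 - |Real.cos θ| := by
    rw [← hcos] at hx
    have : |Real.cos θ| < 1 := abs_lt.2 ⟨by linarith [hx.1], by linarith [hx.2]⟩
    linarith
  refine mem_spectrum_of_forall_exists_norm_lt fun C hC => ?_
  obtain ⟨M, hM⟩ := exists_nat_gt (32 * C ^ 2 / (1 - |Real.cos θ|))
  rw [div_lt_iff₀ hε] at hM
  let w : ℓ²[s] :=
    ⟨radial s (truncSin θ (2 * M)), memℓp_radial hs (summable_norm_truncSin_sq θ _)⟩
  have hw_coe : ⇑w = radial s (truncSin θ (2 * M)) := rfl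
  have hw : M * (1 - |Real.cos θ|) ≤ ‖w‖ ^ 2 := by
    rw [norm_sq_eq_tsum_of_coe_eq_radial hs hw_coe]
    exact tsum_norm_truncSin_sq_ge θ M
  have hr : ‖(x : ℂ) • w - A w‖ ^ 2 ≤ 32 := by
    rw [norm_sq_eq_tsum_of_coe_eq_radial hs (hA.coe_smul_sub_apply_eq_radial hs _ hw_coe), ← hcos,
      Complex.ofReal_mul, Complex.ofReal_ofNat]
    exact tsum_norm_mul_truncSin_sub_jacobi_sq_le θ (2 * M)
  refine ⟨w, lt_of_pow_lt_pow_left₀ 2 (norm_nonneg _) ?_⟩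
  calc (C * ‖(x : ℂ) • w - A w‖) ^ 2 = C ^ 2 * ‖(x : ℂ) • w - A w‖ ^ 2 := mul_pow _ _ _
    _ ≤ C ^ 2 * 32 := by gcongr
    _ < M * (1 - |Real.cos θ|) := by linarith
    _ ≤ ‖w‖ ^ 2 := hw

theorem image_Icc_subset_spectrum (hA : IsAntitreeAdjacency s A) (hs : ∀ n, 0 < s n) :
    (↑) '' Set.Icc (-2 : ℝ) 2 ⊆ spectrum ℂ A := by
  rw [← closure_Ioo (by norm_num : (-2 : ℝ) ≠ 2),
    ← Complex.isometry_ofReal.isClosedEmbedding.closure_image_eq]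
  exact (spectrum.isClosed A).closure_subset_iff.2
    (Set.image_subset_iff.2 fun x hx => hA.ofReal_mem_spectrum hs hx)

end IsAntitreeAdjacency

end Antitree

end

/-- The spectrum of the weighted adjacency operator of an antitree with normalized
edge weights is the interval `[-2, 2]`. -/
theorem stmt_0 (s : ℕ → ℕ) (hs : ∀ n, 1 ≤ s n)
    (A : lp (fun _ : (Σ n : ℕ, Fin (s n)) => ℂ) 2 →L[ℂ]
         lp (fun _ : (Σ n : ℕ, Fin (s n)) => ℂ) 2)
    (hA0 : ∀ (ψ : lp (fun _ : (Σ n : ℕ, Fin (s n)) => ℂ) 2) (i : Fin (s 0)),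
      (A ψ) ⟨0, i⟩ =
        ((Real.sqrt ((s 0 : ℝ) * (s 1 : ℝ)))⁻¹ : ℂ) * ∑ j : Fin (s 1), ψ ⟨1, j⟩)
    (hA : ∀ (ψ : lp (fun _ : (Σ n : ℕ, Fin (s n)) => ℂ) 2) (n : ℕ) (i : Fin (s (n + 1))),
      (A ψ) ⟨n + 1, i⟩ =
        ((Real.sqrt ((s (n + 1) : ℝ) * (s (n + 2) : ℝ)))⁻¹ : ℂ) *
            ∑ j : Fin (s (n + 2)), ψ ⟨n + 2, j⟩
          + ((Real.sqrt ((s (n + 1) : ℝ) * (s n : ℝ)))⁻¹ : ℂ) *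
            ∑ j : Fin (s n), ψ ⟨n, j⟩) :
    spectrum ℂ A = (fun x : ℝ => (x : ℂ)) '' Set.Icc (-2 : ℝ) 2 := by
  have hA' : Antitree.IsAntitreeAdjacency s A := by
    intro ψ
    funext ⟨n, i⟩
    cases n <;>
      simp only [hA0, hA, Antitree.radial, Antitree.radialCoeff, Antitree.jacobi,
        Real.sqrt_mul (Nat.cast_nonneg _), Complex.ofReal_mul, mul_inv] <;>
      ring
  exact (hA'.spectrum_subset hs).antisymm (hA'.image_Icc_subset_spectrum hs)
end

section
/- Assume (A1) and let λ > 0 and E ∈ ℝ with |E| > λ. Then the harmonic average h_{E,λ} := (∫ (E−λv)⁻¹ dμ(v))⁻¹ satisfies |h_{E,λ}| < |E| − λ²σ²/(|E| + λ). -/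
/-!
For a random variable `0 < X ≤ M` with mean `m` and variance `V > 0`, Jensen's inequality only
gives `E[1/X] ≥ 1/m`. The gain comes from replacing `1/x` by a quadratic minorant on `(0, M]`
that touches `1/x` doubly at a point `r` and meets it at `M`: its expectation only involves `m`
and `V`, and for `r = m - V/M` it equals `1/r + V²/(M³r²) > 1/r`. Hence the harmonic mean of `X`
is less than `m - V/M`. For `X = |E| ∓ λv` one has `m = |E|`, `V = λ²σ²` and `M = |E| + λ`.
-/

open MeasureTheory ProbabilityTheory Set

/-- `x⁻¹ - invMinorant r M x = (r - x)² (M - x) / (r² M x)`. -/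
noncomputable def invMinorant (r M x : ℝ) : ℝ :=
  (x ^ 2 - (2 * r + M) * x + (r ^ 2 + 2 * r * M)) / (r ^ 2 * M)

lemma invMinorant_le_inv {r M x : ℝ} (hr : r ≠ 0) (hx : x ∈ Ioc 0 M) :
    invMinorant r M x ≤ x⁻¹ := by
  obtain ⟨hx0, hxM⟩ := hx
  have hM : 0 < M := hx0.trans_le hxM
  have hgap : x⁻¹ - invMinorant r M x = (r - x) ^ 2 * (M - x) / (r ^ 2 * M * x) := by
    unfold invMinorant
    field_simp
    ring
  have : 0 ≤ (r - x) ^ 2 * (M - x) / (r ^ 2 * M * x) := by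
    have : 0 ≤ M - x := sub_nonneg.mpr hxM
    positivity
  linarith

section HarmonicMean

variable {Ω : Type*} [MeasurableSpace Ω] {μ : Measure Ω} [IsProbabilityMeasure μ]
  {X : Ω → ℝ} {M : ℝ}

lemma pos_of_ae_mem_Ioc (hXM : ∀ᵐ ω ∂μ, X ω ∈ Ioc 0 M) : 0 < M := by
  obtain ⟨ω, hω⟩ := hXM.exists
  exact hω.1.trans_le hω.2

lemma integral_invMinorant (hX : MemLp X 2 μ) (r M : ℝ) :
    ∫ ω, invMinorant r M (X ω) ∂μ =
      (μ[X ^ 2] - (2 * r + M) * μ[X] + (r ^ 2 + 2 * r * M)) / (r ^ 2 * M) := by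
  have h1 := hX.integrable one_le_two
  have h2 := hX.integrable_sq
  unfold invMinorant
  rw [integral_div, integral_add, integral_sub, integral_const_mul, integral_const]
  · simp [Pi.pow_apply]
  exacts [h2, h1.const_mul _, h2.sub (h1.const_mul _), integrable_const _]

lemma sub_variance_div_pos (hX : AEMeasurable X μ) (hXM : ∀ᵐ ω ∂μ, X ω ∈ Ioc 0 M)
    (hV : 0 < Var[X; μ]) : 0 < μ[X] - Var[X; μ] / M := by
  have hM : 0 < M := pos_of_ae_mem_Ioc hXM
  have hBD : Var[X; μ] ≤ (M - μ[X]) * (μ[X] - 0) :=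
    variance_le_sub_mul_sub (hXM.mono fun _ h => Ioc_subset_Icc_self h) hX
  have hA : 0 < μ[X] := by
    refine (integral_nonneg_of_ae (hXM.mono fun _ h => h.1.le)).lt_of_ne' fun hA => ?_
    rw [hA] at hBD
    linarith
  rw [sub_pos, div_lt_iff₀ hM]
  nlinarith

theorem harmonicMean_mem_Ioo (hX : AEMeasurable X μ) (hXM : ∀ᵐ ω ∂μ, X ω ∈ Ioc 0 M)
    (hinv : Integrable (fun ω => (X ω)⁻¹) μ) (hV : 0 < Var[X; μ]) :
    (∫ ω, (X ω)⁻¹ ∂μ)⁻¹ ∈ Ioo 0 (μ[X] - Var[X; μ] / M) := by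
  have hr := sub_variance_div_pos hX hXM hV
  set r := μ[X] - Var[X; μ] / M with hr_def
  have hM : 0 < M := pos_of_ae_mem_Ioc hXM
  have hL2 : MemLp X 2 μ :=
    memLp_of_bounded (hXM.mono fun _ h => Ioc_subset_Icc_self h) hX.aestronglyMeasurable 2
  have hmoment : ∫ ω, invMinorant r M (X ω) ∂μ = r⁻¹ + Var[X; μ] ^ 2 / (M ^ 3 * r ^ 2) := by
    rw [integral_invMinorant hL2, show μ[X ^ 2] = Var[X; μ] + μ[X] ^ 2 by
      rw [variance_eq_sub hL2]; ring]
    have hA : μ[X] = r + Var[X; μ] / M := by rw [hr_def]; ring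
    rw [hA]
    field_simp
    ring
  have hlt : r⁻¹ < ∫ ω, (X ω)⁻¹ ∂μ :=
    calc r⁻¹ < r⁻¹ + Var[X; μ] ^ 2 / (M ^ 3 * r ^ 2) := by
          have : 0 < Var[X; μ] ^ 2 / (M ^ 3 * r ^ 2) := by positivity
          linarith
      _ = ∫ ω, invMinorant r M (X ω) ∂μ := hmoment.symm
      _ ≤ ∫ ω, (X ω)⁻¹ ∂μ := by
          refine integral_mono_ae ?_ hinv (hXM.mono fun _ h => invMinorant_le_inv hr.ne' h)
          exact ((hL2.integrable_sq.sub ((hL2.integrable one_le_two).const_mul _)).add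
            (integrable_const _)).div_const _
  have hpos : 0 < ∫ ω, (X ω)⁻¹ ∂μ := (inv_pos.mpr hr).trans hlt
  exact ⟨inv_pos.mpr hpos, (inv_lt_comm₀ hr hpos).mp hlt⟩

end HarmonicMean

lemma abs_harmonicMean_const_sub_mul_lt (μ : Measure ℝ) [IsProbabilityMeasure μ]
    (hsupp : ∀ᵐ v ∂μ, v ∈ Icc (-1 : ℝ) 1) (hmean : ∫ v, v ∂μ = 0)
    (hσ : 0 < ∫ v, v ^ 2 ∂μ) {A c : ℝ} (hc : c ≠ 0) (hcA : |c| < A) :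
    |(∫ v, (A - c * v)⁻¹ ∂μ)⁻¹| < A - c ^ 2 * (∫ v, v ^ 2 ∂μ) / (A + |c|) := by
  have hrange : ∀ᵐ v ∂μ, A - c * v ∈ Icc (A - |c|) (A + |c|) := hsupp.mono fun v hv => by
    have : |c * v| ≤ |c| := by
      rw [abs_mul]
      exact mul_le_of_le_one_right (abs_nonneg c) (abs_le.mpr hv)
    constructor <;> linarith [abs_le.mp this]
  have hid : MemLp (fun v : ℝ => v) 2 μ :=
    memLp_of_bounded hsupp aestronglyMeasurable_id 2
  have hmeanX : ∫ v, (A - c * v) ∂μ = A := by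
    rw [integral_sub (integrable_const A) ((hid.integrable one_le_two).const_mul c),
      integral_const_mul, hmean]
    simp
  have hvarX : Var[fun v => A - c * v; μ] = c ^ 2 * ∫ v, v ^ 2 ∂μ := by
    rw [variance_const_sub (by fun_prop), variance_const_mul, variance_eq_sub hid]
    simp [hmean, Pi.pow_apply]
  have hinv : Integrable (fun v => (A - c * v)⁻¹) μ := by
    refine Integrable.of_bound (by fun_prop) (A - |c|)⁻¹ (hrange.mono fun v hv => ?_)
    have hpos : 0 < A - c * v := by linarith [hv.1]
    rw [Real.norm_eq_abs, abs_inv, abs_of_pos hpos]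
    exact inv_anti₀ (by linarith) hv.1
  have h := harmonicMean_mem_Ioo (M := A + |c|) (by fun_prop)
    (hrange.mono fun v hv => ⟨by linarith [hv.1], hv.2⟩) hinv
    (by rw [hvarX]; positivity)
  rw [hmeanX, hvarX] at h
  rw [abs_of_pos h.1]
  exact h.2

/-- Under assumption (A1), for `λ > 0` and `|E| > λ`, the harmonic average
`h_{E,λ} = (∫ (E-λv)⁻¹ dμ)⁻¹` satisfies `|h_{E,λ}| < |E| - λ²σ²/(|E|+λ)`. -/
theorem stmt_1 (μ : Measure ℝ) [IsProbabilityMeasure μ]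
    (hsupp : μ (Set.Icc (-1 : ℝ) 1) = 1)
    (hmean : (∫ v, v ∂μ) = 0)
    (σ2 : ℝ) (hσ2 : σ2 = ∫ v, v ^ 2 ∂μ) (hσpos : 0 < σ2)
    (lam E : ℝ) (hlam : 0 < lam) (hE : lam < |E|)
    (h : ℝ) (hh : h = (∫ v, (E - lam * v)⁻¹ ∂μ)⁻¹) :
    |h| < |E| - lam ^ 2 * σ2 / (|E| + lam) := by
  have hae : ∀ᵐ v ∂μ, v ∈ Icc (-1 : ℝ) 1 := (mem_ae_iff_prob_eq_one measurableSet_Icc).mpr hsupp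
  subst hσ2 hh
  rcases le_or_gt 0 E with hE0 | hE0
  · rw [abs_of_nonneg hE0] at hE ⊢
    simpa [abs_of_pos hlam] using
      abs_harmonicMean_const_sub_mul_lt μ hae hmean hσpos hlam.ne' (by rwa [abs_of_pos hlam])
  · rw [abs_of_neg hE0] at hE ⊢
    have hneg : ∫ v, (E - lam * v)⁻¹ ∂μ = -∫ v, (-E - -lam * v)⁻¹ ∂μ := by
      rw [← integral_neg]
      congr with v
      rw [← inv_neg]
      ring_nf
    rw [hneg, inv_neg, abs_neg]
    simpa [abs_of_pos hlam] using abs_harmonicMean_const_sub_mul_lt μ hae hmean hσpos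
      (neg_ne_zero.mpr hlam.ne') (by rwa [abs_neg, abs_of_pos hlam])
end

section
/- Assume (A1) and let λ > 0. If E ∈ ℝ satisfies λ < E ≤ 1 − λ/2 + √((1 + λ/2)² + λ²σ²), then the harmonic average h_{E,λ} := (∫ (E−λv)⁻¹ dμ(v))⁻¹ satisfies 0 < h_{E,λ} < 2 (so E belongs to the delocalized energy region I_λ). -/
open MeasureTheory Set

/-!
The map `v ↦ (E - λ v)⁻¹` has positive third derivative on `[-1, 1]`, so it lies above its
quadratic Hermite interpolant at the nodes `σ², σ², -1`: the interpolation remainder is a positive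
multiple of `(v + 1) (v - σ²)²`. Integrating against `μ`, whose first two moments are `0` and `σ²`,
bounds `∫ (E - λ v)⁻¹ dμ` below by its value `(E + λ - λσ²) / ((E + λ)(E - λσ²))` for the two-point
law on `{-1, σ²}` with the same moments. The upper bound on `E` is equivalent to
`(E - 2)(E + λ) ≤ λ²σ²`, which makes that two-point value exceed `1/2`.
-/

theorem ContinuousOn.integrable_of_ae_mem {X F : Type*} [TopologicalSpace X] [MeasurableSpace X]
    [OpensMeasurableSpace X] [NormedAddCommGroup F] {μ : Measure X} [IsFiniteMeasureOnCompacts μ]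
    {K : Set X} {f : X → F} (hf : ContinuousOn f K) (hK : IsCompact K) (h'K : MeasurableSet K)
    (hμK : ∀ᵐ x ∂μ, x ∈ K) : Integrable f μ := by
  rw [← Measure.restrict_eq_self_of_ae_mem hμK]
  exact hf.integrableOn_compact' hK h'K

/-- The quadratic Hermite interpolant of `v ↦ (E - lam * v)⁻¹` at the nodes `s, s, -1`. -/
noncomputable def hermiteQuadratic (lam E s v : ℝ) : ℝ :=
  (E - lam * s)⁻¹ + lam / (E - lam * s) ^ 2 * (v - s)
    + lam ^ 2 / ((E + lam) * (E - lam * s) ^ 2) * (v - s) ^ 2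

section HermiteQuadratic

variable {lam E s v : ℝ}

theorem inv_sub_hermiteQuadratic (ha : E + lam ≠ 0) (hb : E - lam * s ≠ 0)
    (hv : E - lam * v ≠ 0) :
    (E - lam * v)⁻¹ - hermiteQuadratic lam E s v
      = lam ^ 3 * (v + 1) * (v - s) ^ 2 / ((E + lam) * (E - lam * s) ^ 2 * (E - lam * v)) := by
  unfold hermiteQuadratic
  field_simp
  ring

theorem hermiteQuadratic_le_inv (hlam : 0 ≤ lam) (ha : 0 < E + lam) (hb : E - lam * s ≠ 0)
    (hv1 : -1 ≤ v) (hv : 0 < E - lam * v) :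
    hermiteQuadratic lam E s v ≤ (E - lam * v)⁻¹ := by
  have hv1' : 0 ≤ v + 1 := by linarith
  rw [← sub_nonneg, inv_sub_hermiteQuadratic ha.ne' hb hv.ne']
  positivity

theorem integral_hermiteQuadratic {μ : Measure ℝ} [IsProbabilityMeasure μ]
    (hv : Integrable (fun v ↦ v) μ) (hv2 : Integrable (fun v ↦ v ^ 2) μ)
    (hmean : ∫ v, v ∂μ = 0) (hs : ∫ v, v ^ 2 ∂μ = s) (ha : E + lam ≠ 0) (hb : E - lam * s ≠ 0) :
    ∫ v, hermiteQuadratic lam E s v ∂μ = (E + lam - lam * s) / ((E + lam) * (E - lam * s)) := by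
  set c := lam ^ 2 / ((E + lam) * (E - lam * s) ^ 2)
  set d := lam / (E - lam * s) ^ 2
  have hq : (fun v ↦ hermiteQuadratic lam E s v)
      = fun v ↦ ((E - lam * s)⁻¹ - d * s + c * s ^ 2) + (d - 2 * c * s) * v + c * v ^ 2 := by
    funext v
    unfold hermiteQuadratic
    ring
  have hlin : Integrable (fun v ↦ ((E - lam * s)⁻¹ - d * s + c * s ^ 2) + (d - 2 * c * s) * v) μ :=
    (integrable_const _).add (hv.const_mul _)
  rw [hq, integral_add hlin (hv2.const_mul c), integral_add (integrable_const _)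
    (hv.const_mul _), integral_const_mul, integral_const_mul, hmean, hs, integral_const]
  simp only [probReal_univ, one_smul, c, d]
  field_simp
  ring

end HermiteQuadratic

section SupportedOnIcc

variable {μ : Measure ℝ} [IsProbabilityMeasure μ]

theorem integral_sq_le_one_of_ae_mem_Icc (hsupp : ∀ᵐ v ∂μ, v ∈ Icc (-1 : ℝ) 1) :
    ∫ v, v ^ 2 ∂μ ≤ 1 := by
  calc ∫ v, v ^ 2 ∂μ ≤ ∫ _, (1 : ℝ) ∂μ := by
        refine integral_mono_ae ((continuous_pow 2).continuousOn.integrable_of_ae_mem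
          isCompact_Icc measurableSet_Icc hsupp) (integrable_const 1) ?_
        filter_upwards [hsupp] with v hv
        nlinarith [hv.1, hv.2]
    _ = 1 := by simp

theorem div_le_integral_inv_sub_mul (hsupp : ∀ᵐ v ∂μ, v ∈ Icc (-1 : ℝ) 1)
    (hmean : ∫ v, v ∂μ = 0) {s lam E : ℝ} (hs : ∫ v, v ^ 2 ∂μ = s) (hlam : 0 ≤ lam)
    (hE : lam < E) :
    (E + lam - lam * s) / ((E + lam) * (E - lam * s)) ≤ ∫ v, (E - lam * v)⁻¹ ∂μ := by
  have hpos : ∀ v ∈ Icc (-1 : ℝ) 1, 0 < E - lam * v := fun v hv ↦ by nlinarith [hv.2]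
  have hs1 : s ≤ 1 := hs ▸ integral_sq_le_one_of_ae_mem_Icc hsupp
  have ha : 0 < E + lam := by linarith
  have hb : 0 < E - lam * s := by nlinarith
  have hint : ∀ {f : ℝ → ℝ}, ContinuousOn f (Icc (-1) 1) → Integrable f μ :=
    fun hf ↦ hf.integrable_of_ae_mem isCompact_Icc measurableSet_Icc hsupp
  rw [← integral_hermiteQuadratic (hint continuousOn_id) (hint (continuous_pow 2).continuousOn)
    hmean hs ha.ne' hb.ne']
  refine integral_mono_ae (hint ?_) (hint ?_) ?_
  · unfold hermiteQuadratic
    fun_prop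
  · exact ContinuousOn.inv₀ (by fun_prop) fun v hv ↦ (hpos v hv).ne'
  · filter_upwards [hsupp] with v hv
    exact hermiteQuadratic_le_inv hlam ha hb.ne' hv.1 (hpos v hv)

end SupportedOnIcc

theorem mul_lt_two_mul_of_le_sqrt {lam E s : ℝ} (hlam : 0 < lam) (hs : 0 < s) (hb : lam * s < E)
    (hE : E ≤ 1 - lam / 2 + √((1 + lam / 2) ^ 2 + lam ^ 2 * s)) :
    (E + lam) * (E - lam * s) < 2 * (E + lam - lam * s) := by
  have hsq : (E - 2) * (E + lam) ≤ lam ^ 2 * s := by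
    have hroot : 1 + lam / 2 ≤ √((1 + lam / 2) ^ 2 + lam ^ 2 * s) :=
      Real.le_sqrt_of_sq_le (by nlinarith [mul_pos (pow_pos hlam 2) hs])
    have := (Real.sq_le (x := E - (1 - lam / 2))
      (y := (1 + lam / 2) ^ 2 + lam ^ 2 * s) (by positivity)).2
      ⟨by nlinarith [mul_pos hlam hs], by linarith⟩
    nlinarith
  have hls : 0 < lam * s := mul_pos hlam hs
  rcases le_or_gt E 2 with hE2 | hE2
  · nlinarith [mul_nonneg (by linarith : (0 : ℝ) ≤ 2 - E) (by linarith : 0 ≤ E + lam - lam * s)]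
  · nlinarith [mul_pos hls (by linarith : (0 : ℝ) < E - 2)]

/-- Under assumption (A1), for `λ > 0` and `λ < E ≤ 1 - λ/2 + √((1+λ/2)² + λ²σ²)`,
the harmonic average `h_{E,λ}` satisfies `0 < h_{E,λ} < 2`, i.e. `E ∈ I_λ`. -/
theorem stmt_2 (μ : Measure ℝ) [IsProbabilityMeasure μ]
    (hsupp : μ (Set.Icc (-1 : ℝ) 1) = 1)
    (hmean : (∫ v, v ∂μ) = 0)
    (σ2 : ℝ) (hσ2 : σ2 = ∫ v, v ^ 2 ∂μ) (hσpos : 0 < σ2)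
    (lam E : ℝ) (hlam : 0 < lam)
    (hE1 : lam < E)
    (hE2 : E ≤ 1 - lam / 2 + Real.sqrt ((1 + lam / 2) ^ 2 + lam ^ 2 * σ2))
    (h : ℝ) (hh : h = (∫ v, (E - lam * v)⁻¹ ∂μ)⁻¹) :
    0 < h ∧ h < 2 := by
  have hae : ∀ᵐ v ∂μ, v ∈ Icc (-1 : ℝ) 1 := (mem_ae_iff_prob_eq_one measurableSet_Icc).2 hsupp
  have hb : lam * σ2 < E := by
    nlinarith [hσ2 ▸ integral_sq_le_one_of_ae_mem_Icc hae]
  have hhalf : (1 : ℝ) / 2 < (E + lam - lam * σ2) / ((E + lam) * (E - lam * σ2)) := by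
    have : 0 < E + lam := by linarith
    have : 0 < E - lam * σ2 := by linarith
    rw [div_lt_div_iff₀ (by norm_num) (by positivity)]
    linarith [mul_lt_two_mul_of_le_sqrt hlam hσpos hb hE2]
  have hI := hhalf.trans_le (div_le_integral_inv_sub_mul hae hmean hσ2.symm hlam.le hE1)
  subst hh
  exact ⟨inv_pos.2 (by linarith), by simpa using inv_strictAnti₀ (by norm_num) hI⟩
end

section
/- Assume (A1) and let λ > 0. Then for every real E > λ, the function t ↦ h_{t,λ} = (∫ (t−λv)⁻¹ dμ(v))⁻¹, defined for real t > λ, is differentiable at E and its derivative at E is strictly greater than 1. -/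
open MeasureTheory ProbabilityTheory

/-! Differentiating under the integral sign, the reciprocal of `t ↦ ∫ (t - λv)⁻¹ dμ` has
derivative `𝔼[f²] / 𝔼[f]²` at `E`, where `f = (E - λv)⁻¹`. This exceeds `1` exactly when `f`
has positive variance, and it does: `f` is an injective function of `v`, which is not a.s.
constant since it has mean zero and positive second moment. -/

section InvSub

variable {α : Type*} [MeasurableSpace α] {μ : Measure α} {g : α → ℝ} {c t : ℝ}

lemma inv_sub_mem_Icc {x : ℝ} (hx : x ≤ c) (ht : c < t) : (t - x)⁻¹ ∈ Set.Icc 0 (t - c)⁻¹ :=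
  ⟨inv_nonneg.2 (by linarith), inv_anti₀ (by linarith) (by linarith)⟩

lemma memLp_inv_sub [IsFiniteMeasure μ] (hg : AEStronglyMeasurable g μ)
    (hgc : ∀ᵐ x ∂μ, g x ≤ c) (ht : c < t) (p : ENNReal) :
    MemLp (fun x => (t - g x)⁻¹) p μ :=
  memLp_of_bounded (hgc.mono fun _ hx => inv_sub_mem_Icc hx ht) (by fun_prop) p

lemma hasDerivAt_integral_inv_sub [IsFiniteMeasure μ] (hg : AEStronglyMeasurable g μ)
    (hgc : ∀ᵐ x ∂μ, g x ≤ c) (ht : c < t) :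
    HasDerivAt (fun s => ∫ x, (s - g x)⁻¹ ∂μ) (-∫ x, ((t - g x)⁻¹) ^ 2 ∂μ) t := by
  set r := (t - c) / 2
  have hr : 0 < r := by simp only [r]; linarith
  have hball : ∀ s ∈ Metric.ball t r, ∀ x, g x ≤ c → r ≤ s - g x := fun s hs x hx => by
    rw [Metric.mem_ball, Real.dist_eq, abs_lt] at hs
    simp only [r] at *; linarith
  have hdom := hasDerivAt_integral_of_dominated_loc_of_deriv_le (μ := μ)
    (F := fun s x => (s - g x)⁻¹) (F' := fun s x => -((s - g x)⁻¹) ^ 2) (x₀ := t)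
    (bound := fun _ => (r⁻¹) ^ 2) (Metric.ball_mem_nhds t hr)
    (.of_forall fun s => by fun_prop)
    ((memLp_inv_sub hg hgc ht 1).integrable le_rfl) (by fun_prop) ?_ (integrable_const _) ?_
  · simpa only [integral_neg] using hdom.2
  · filter_upwards [hgc] with x hx s hs
    have hrs := hball s hs x hx
    have hpos : 0 ≤ (s - g x)⁻¹ := inv_nonneg.2 (hr.le.trans hrs)
    rw [norm_neg, norm_pow, Real.norm_of_nonneg hpos]
    exact pow_le_pow_left₀ hpos (inv_anti₀ hr hrs) 2
  · filter_upwards [hgc] with x hx s hs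
    have hne : s - g x ≠ 0 := (hr.trans_le (hball s hs x hx)).ne'
    simpa [neg_div, inv_pow] using ((hasDerivAt_id s).sub_const (g x)).fun_inv hne

end InvSub

lemma integral_pos_of_ae_pos {α : Type*} [MeasurableSpace α] {μ : Measure α} [NeZero μ]
    {f : α → ℝ} (hf : Integrable f μ) (hpos : ∀ᵐ x ∂μ, 0 < f x) : 0 < ∫ x, f x ∂μ := by
  refine (integral_pos_iff_support_of_nonneg_ae (hpos.mono fun _ hx => hx.le) hf).2 ?_
  refine pos_iff_ne_zero.2 fun hnull => ?_
  obtain ⟨x, hx, hx'⟩ := ((measure_eq_zero_iff_ae_notMem.1 hnull).and hpos).exists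
  exact hx hx'.ne'

lemma variance_comp_pos_of_injective {Ω : Type*} [MeasurableSpace Ω] {μ : Measure Ω}
    [IsProbabilityMeasure μ] {X : Ω → ℝ} {φ : ℝ → ℝ} (hφ : Function.Injective φ)
    (hφX : MemLp (fun ω => φ (X ω)) 2 μ) (hvar : 0 < Var[X; μ]) :
    0 < Var[fun ω => φ (X ω); μ] := by
  refine (variance_nonneg _ _).lt_of_ne fun hzero => hvar.ne' ?_
  have hφX_const := ae_eq_integral_of_variance_eq_zero hφX hzero.symm
  obtain ⟨ω₀, hω₀⟩ := hφX_const.exists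
  have hconst : X =ᵐ[μ] fun _ => X ω₀ := by
    filter_upwards [hφX_const] with ω hω
    exact hφ (hω.trans hω₀.symm)
  rw [variance_congr hconst, variance_eq_integral aemeasurable_const]
  simp

/-- Under assumption (A1), for `λ > 0` the map `t ↦ h_{t,λ} = (∫ (t-λv)⁻¹ dμ)⁻¹` is
differentiable at every `E > λ` with derivative strictly greater than `1`. -/
theorem stmt_3 (μ : Measure ℝ) [IsProbabilityMeasure μ]
    (hsupp : μ (Set.Icc (-1 : ℝ) 1) = 1)
    (hmean : (∫ v, v ∂μ) = 0)
    (hvar : 0 < ∫ v, v ^ 2 ∂μ)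
    (lam : ℝ) (hlam : 0 < lam) (E : ℝ) (hE : lam < E) :
    ∃ d : ℝ, HasDerivAt (fun t : ℝ => (∫ v, (t - lam * v)⁻¹ ∂μ)⁻¹) d E ∧ 1 < d := by
  have hsupp_ae : ∀ᵐ v ∂μ, v ∈ Set.Icc (-1 : ℝ) 1 :=
    (ae_mem_iff_measure_eq measurableSet_Icc.nullMeasurableSet).2 (by rw [hsupp, measure_univ])
  have hbound : ∀ᵐ v ∂μ, lam * v ≤ lam := hsupp_ae.mono fun v hv => by nlinarith [hv.2]
  have hg : AEStronglyMeasurable (fun v : ℝ => lam * v) μ := by fun_prop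
  have hf : MemLp (fun v => (E - lam * v)⁻¹) 2 μ := memLp_inv_sub hg hbound hE 2
  have hF : 0 < ∫ v, (E - lam * v)⁻¹ ∂μ :=
    integral_pos_of_ae_pos (hf.integrable one_le_two)
      (hbound.mono fun v hv => inv_pos.2 (by linarith))
  have hinj : Function.Injective fun v : ℝ => (E - lam * v)⁻¹ :=
    inv_injective.comp fun v w h => by simpa [hlam.ne'] using h
  have hvar_f : 0 < Var[fun v => (E - lam * v)⁻¹; μ] :=
    variance_comp_pos_of_injective (X := fun v => v) hinj hf
      (by rwa [variance_of_integral_eq_zero aemeasurable_id' hmean])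
  rw [variance_eq_sub hf, sub_pos] at hvar_f
  refine ⟨_, (hasDerivAt_integral_inv_sub hg hbound hE).inv hF.ne', ?_⟩
  rw [neg_neg, one_lt_div (by positivity)]
  simpa using hvar_f
end

section
/- Let N ≥ 1, V an N×N complex Hermitian matrix, φ ∈ ℂ^N nonzero, and E ∈ ℝ such that E·1 − V is invertible and f(E) ≠ 0. Then for every η > 0: |a_{E+iη} − a_E| ≤ η·‖ψ_E‖², and ‖ψ_{E+iη}‖ ≤ ‖ψ_E‖. -/
open Matrix

/-- `f z = ⟨φ, (z•1 - V)⁻¹ φ⟩`, conjugate-linear in the first slot. -/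
noncomputable def fRes {N : ℕ} (V : Matrix (Fin N) (Fin N) ℂ) (φ : Fin N → ℂ) (z : ℂ) : ℂ :=
  star φ ⬝ᵥ ((z • (1 : Matrix (Fin N) (Fin N) ℂ) - V)⁻¹ *ᵥ φ)

/-- `a_z = 1 / f(z)`. -/
noncomputable def aRes {N : ℕ} (V : Matrix (Fin N) (Fin N) ℂ) (φ : Fin N → ℂ) (z : ℂ) : ℂ :=
  (fRes V φ z)⁻¹

/-- `ψ_z = f(z)⁻¹ • (z•1 - V)⁻¹ φ`. -/
noncomputable def psiRes {N : ℕ} (V : Matrix (Fin N) (Fin N) ℂ) (φ : Fin N → ℂ) (z : ℂ) :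
    Fin N → ℂ :=
  (fRes V φ z)⁻¹ • ((z • (1 : Matrix (Fin N) (Fin N) ℂ) - V)⁻¹ *ᵥ φ)

/-- The Euclidean norm on `ℂ^N`. -/
noncomputable def euclNorm {N : ℕ} (v : Fin N → ℂ) : ℝ :=
  Real.sqrt (∑ i, ‖v i‖ ^ 2)

/-! The resolvent identity gives `a_z - a_w = (z - w) ⟨ψ_{w̄}, ψ_z⟩`, so
`a_{E+iη} - a_E = iη ⟨ψ_E, ψ_{E+iη}⟩`. Since `Im ⟨t, (z - V) t⟩ = Im z ‖t‖²` for Hermitian `V`,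
`Im a_z = Im z ‖ψ_z‖²`; in particular `a_E` is real, and the imaginary part of the identity reads
`‖ψ_{E+iη}‖² = Re ⟨ψ_E, ψ_{E+iη}⟩ ≤ ‖ψ_E‖ ‖ψ_{E+iη}‖`. This is the second bound, and with
Cauchy–Schwarz the identity itself gives the first. -/

open WithLp (toLp)

lemma euclNorm_eq_norm_toLp {N : ℕ} (v : Fin N → ℂ) : euclNorm v = ‖toLp 2 v‖ := by
  rw [EuclideanSpace.norm_eq]; rfl

lemma star_dotProduct_eq_inner {n : Type*} [Fintype n] (u v : n → ℂ) :
    star u ⬝ᵥ v = inner ℂ (toLp 2 u) (toLp 2 v) := by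
  rw [EuclideanSpace.inner_toLp_toLp, dotProduct_comm]

lemma star_dotProduct_self_eq_norm_sq {n : Type*} [Fintype n] (v : n → ℂ) :
    star v ⬝ᵥ v = ((‖toLp 2 v‖ ^ 2 : ℝ) : ℂ) := by
  rw [star_dotProduct_eq_inner, inner_self_eq_norm_sq_to_K]
  push_cast; rfl

lemma norm_le_of_norm_sq_le_re_inner {E : Type*} [NormedAddCommGroup E] [InnerProductSpace ℂ E]
    {x y : E} (h : ‖y‖ ^ 2 ≤ RCLike.re (inner ℂ x y)) : ‖y‖ ≤ ‖x‖ := by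
  have := h.trans (re_inner_le_norm x y)
  nlinarith [norm_nonneg x, norm_nonneg y]

lemma Matrix.mulVec_nonsing_inv_mulVec {n R : Type*} [Fintype n] [DecidableEq n] [CommRing R]
    {A : Matrix n n R} (hA : IsUnit A) (v : n → R) : A *ᵥ (A⁻¹ *ᵥ v) = v := by
  rw [mulVec_mulVec, mul_nonsing_inv _ ((isUnit_iff_isUnit_det A).1 hA), one_mulVec]

section Hermitian

variable {n : Type*} [DecidableEq n] {V : Matrix n n ℂ}

lemma Matrix.IsHermitian.conjTranspose_smul_one_sub (hV : V.IsHermitian) (z : ℂ) :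
    (z • (1 : Matrix n n ℂ) - V)ᴴ = star z • 1 - V := by
  rw [conjTranspose_sub, conjTranspose_smul, conjTranspose_one, hV.eq]

variable [Fintype n]

lemma Matrix.IsHermitian.im_star_dotProduct_smul_one_sub_mulVec_self (hV : V.IsHermitian)
    (z : ℂ) (t : n → ℂ) :
    (star t ⬝ᵥ (z • 1 - V) *ᵥ t).im = z.im * ‖toLp 2 t‖ ^ 2 := by
  have hVt : (star t ⬝ᵥ V *ᵥ t).im = 0 := hV.im_star_dotProduct_mulVec_self t
  rw [sub_mulVec, smul_mulVec, one_mulVec, dotProduct_sub, dotProduct_smul,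
    star_dotProduct_self_eq_norm_sq, smul_eq_mul, Complex.sub_im, hVt, Complex.mul_im,
    Complex.ofReal_re, Complex.ofReal_im]
  ring

lemma Matrix.IsHermitian.isUnit_smul_one_sub_of_im_ne_zero (hV : V.IsHermitian) {z : ℂ}
    (hz : z.im ≠ 0) : IsUnit (z • (1 : Matrix n n ℂ) - V) := by
  rw [← mulVec_injective_iff_isUnit]
  refine (injective_iff_map_eq_zero (z • (1 : Matrix n n ℂ) - V).mulVecLin).2 fun t ht => ?_
  have hquad := hV.im_star_dotProduct_smul_one_sub_mulVec_self z t
  rw [← mulVecLin_apply, ht, dotProduct_zero, Complex.zero_im, eq_comm] at hquad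
  simpa [hz] using hquad

end Hermitian

section Resolvent

variable {N : ℕ} {V : Matrix (Fin N) (Fin N) ℂ} (φ : Fin N → ℂ) {z w : ℂ}

lemma fRes_star (hV : V.IsHermitian) (z : ℂ) : fRes V φ (star z) = star (fRes V φ z) := by
  rw [fRes, fRes, ← star_dotProduct, star_mulVec, ← dotProduct_mulVec, conjTranspose_nonsing_inv,
    hV.conjTranspose_smul_one_sub]

lemma im_fRes (hV : V.IsHermitian) (hz : IsUnit (z • (1 : Matrix (Fin N) (Fin N) ℂ) - V)) :
    (fRes V φ z).im =
      -(z.im * ‖toLp 2 ((z • (1 : Matrix (Fin N) (Fin N) ℂ) - V)⁻¹ *ᵥ φ)‖ ^ 2) := by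
  rw [← hV.im_star_dotProduct_smul_one_sub_mulVec_self, mulVec_nonsing_inv_mulVec hz, fRes,
    star_dotProduct, Complex.star_def, Complex.conj_im]

lemma fRes_ne_zero_of_im_ne_zero (hV : V.IsHermitian) (hφ : φ ≠ 0) (hz : z.im ≠ 0) :
    fRes V φ z ≠ 0 := by
  intro h
  have hA := hV.isUnit_smul_one_sub_of_im_ne_zero hz
  have him := im_fRes φ hV hA
  rw [h, Complex.zero_im, eq_comm, neg_eq_zero] at him
  have hy : (z • (1 : Matrix (Fin N) (Fin N) ℂ) - V)⁻¹ *ᵥ φ = 0 := by simpa [hz] using him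
  exact hφ (by rw [← mulVec_nonsing_inv_mulVec hA φ, hy, mulVec_zero])

lemma im_aRes (hV : V.IsHermitian) (hz : IsUnit (z • (1 : Matrix (Fin N) (Fin N) ℂ) - V)) :
    (aRes V φ z).im = z.im * euclNorm (psiRes V φ z) ^ 2 := by
  rw [aRes, psiRes, euclNorm_eq_norm_toLp, WithLp.toLp_smul, norm_smul, mul_pow, norm_inv,
    inv_pow, Complex.sq_norm, Complex.inv_im, im_fRes φ hV hz]
  ring

lemma fRes_sub_fRes (hV : V.IsHermitian) (hz : IsUnit (z • (1 : Matrix (Fin N) (Fin N) ℂ) - V))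
    (hw : IsUnit (w • (1 : Matrix (Fin N) (Fin N) ℂ) - V)) :
    fRes V φ z - fRes V φ w = (w - z) *
      (star ((star w • (1 : Matrix (Fin N) (Fin N) ℂ) - V)⁻¹ *ᵥ φ) ⬝ᵥ
        (z • (1 : Matrix (Fin N) (Fin N) ℂ) - V)⁻¹ *ᵥ φ) := by
  have hres := Matrix.inv_sub_inv (iff_of_true hw hz)
  rw [sub_sub_sub_cancel_right, ← sub_smul, mul_smul_comm, mul_one, smul_mul_assoc] at hres
  rw [fRes, fRes, ← dotProduct_sub, ← sub_mulVec, ← neg_sub, hres, neg_mulVec, smul_mulVec,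
    ← mulVec_mulVec, dotProduct_neg, dotProduct_smul, dotProduct_mulVec, star_mulVec,
    conjTranspose_nonsing_inv, hV.conjTranspose_smul_one_sub, star_star, smul_eq_mul, ← neg_mul,
    neg_sub]

lemma aRes_sub_aRes (hV : V.IsHermitian) (hz : IsUnit (z • (1 : Matrix (Fin N) (Fin N) ℂ) - V))
    (hw : IsUnit (w • (1 : Matrix (Fin N) (Fin N) ℂ) - V)) (hfz : fRes V φ z ≠ 0)
    (hfw : fRes V φ w ≠ 0) :
    aRes V φ z - aRes V φ w = (z - w) * (star (psiRes V φ (star w)) ⬝ᵥ psiRes V φ z) := by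
  rw [aRes, aRes, _root_.inv_sub_inv hfz hfw, ← neg_sub, fRes_sub_fRes φ hV hz hw, psiRes, psiRes,
    fRes_star φ hV, star_smul, smul_dotProduct, dotProduct_smul, star_inv₀, star_star]
  simp only [smul_eq_mul]
  field_simp
  ring

end Resolvent

theorem stmt_5_general (N : ℕ) (V : Matrix (Fin N) (Fin N) ℂ) (hV : V.IsHermitian)
    (φ : Fin N → ℂ) (hφ : φ ≠ 0) (E : ℝ)
    (hinv : IsUnit ((E : ℂ) • (1 : Matrix (Fin N) (Fin N) ℂ) - V))
    (hf : fRes V φ (E : ℂ) ≠ 0) :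
    ∀ η : ℝ, 0 < η →
      ‖aRes V φ ((E : ℂ) + η * Complex.I) - aRes V φ (E : ℂ)‖
          ≤ η * (euclNorm (psiRes V φ (E : ℂ))) ^ 2 ∧
      euclNorm (psiRes V φ ((E : ℂ) + η * Complex.I)) ≤ euclNorm (psiRes V φ (E : ℂ)) := by
  intro η hη
  set z : ℂ := E + η * Complex.I
  have hzim : z.im = η := by simp [z]
  have hzim_ne : z.im ≠ 0 := hzim ▸ hη.ne'
  have hz := hV.isUnit_smul_one_sub_of_im_ne_zero hzim_ne
  simp only [euclNorm_eq_norm_toLp]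
  set ψE := toLp 2 (psiRes V φ E)
  set ψz := toLp 2 (psiRes V φ z)
  have hdiff : aRes V φ z - aRes V φ E = η * Complex.I * inner ℂ ψE ψz := by
    rw [aRes_sub_aRes φ hV hz hinv (fRes_ne_zero_of_im_ne_zero φ hV hφ hzim_ne) hf,
      Complex.star_def, Complex.conj_ofReal, star_dotProduct_eq_inner]
    ring
  have hre : ‖ψz‖ ^ 2 = RCLike.re (inner ℂ ψE ψz) := by
    have him := congrArg Complex.im hdiff
    rw [Complex.sub_im, im_aRes φ hV hz, im_aRes φ hV hinv, hzim, Complex.ofReal_im, zero_mul,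
      sub_zero, euclNorm_eq_norm_toLp] at him
    simpa [hη.ne'] using him
  have hψ : ‖ψz‖ ≤ ‖ψE‖ := norm_le_of_norm_sq_le_re_inner hre.le
  refine ⟨?_, hψ⟩
  calc ‖aRes V φ z - aRes V φ E‖ = η * ‖inner ℂ ψE ψz‖ := by
        rw [hdiff, norm_mul, norm_mul, Complex.norm_I, Complex.norm_real, Real.norm_of_nonneg hη.le,
          mul_one]
    _ ≤ η * (‖ψE‖ * ‖ψz‖) := by gcongr; exact norm_inner_le_norm ψE ψz
    _ ≤ η * ‖ψE‖ ^ 2 := by rw [sq]; gcongr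

/-- Key estimate, Lemma 2.11(i) of the paper: for real `E` where `f(E)` is defined and
nonzero, `|a_{E+iη} - a_E| ≤ η‖ψ_E‖²` and `‖ψ_{E+iη}‖ ≤ ‖ψ_E‖` for all `η > 0`. -/
theorem stmt_5 (N : ℕ) (hN : 1 ≤ N) (V : Matrix (Fin N) (Fin N) ℂ) (hV : V.IsHermitian)
    (φ : Fin N → ℂ) (hφ : φ ≠ 0) (E : ℝ)
    (hinv : IsUnit ((E : ℂ) • (1 : Matrix (Fin N) (Fin N) ℂ) - V))
    (hf : fRes V φ (E : ℂ) ≠ 0) :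
    ∀ η : ℝ, 0 < η →
      ‖aRes V φ ((E : ℂ) + η * Complex.I) - aRes V φ (E : ℂ)‖
          ≤ η * (euclNorm (psiRes V φ (E : ℂ))) ^ 2 ∧
      euclNorm (psiRes V φ ((E : ℂ) + η * Complex.I)) ≤ euclNorm (psiRes V φ (E : ℂ)) :=
  stmt_5_general N V hV φ hφ E hinv hf
end

section
/- Fix reals 0 < a ≤ b and a Borel probability measure μ on ℝ with μ([a,b]) = 1, and assume σ₂ > 0. Then for every n ≥ 1: 0 < ∫ M_n dμⁿ − h ≤ b·h²·σ₂/n. -/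
/-!
Let `Y` be the sample mean of the `xⱼ⁻¹`, so that `Mₙ = Y⁻¹`, `𝔼 Y = h⁻¹` and `Var Y = σ₂ / n`.
Integrating `(y - m)² / y = y - 2m + m² y⁻¹` at `m = 𝔼 Y` shows that the Jensen gap
`𝔼 Y⁻¹ - (𝔼 Y)⁻¹` equals `h² 𝔼 [(Y - 𝔼 Y)² / Y]`. As `Y` takes values in `[b⁻¹, a⁻¹]`, this lies between
`a h² Var Y` and `b h² Var Y`.
-/

open MeasureTheory ProbabilityTheory

section InverseJensenGap

lemma sq_sub_div_eq {y : ℝ} (m : ℝ) (hy : y ≠ 0) : (y - m) ^ 2 / y = y - 2 * m + m ^ 2 * y⁻¹ := by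
  field_simp
  ring

variable {Ω : Type*} [MeasurableSpace Ω] {ν : Measure Ω} {Y : Ω → ℝ} {c d : ℝ}

lemma sq_sub_div_ae_eq (hc : 0 < c) (hYcd : ∀ᵐ ω ∂ν, Y ω ∈ Set.Icc c d) (m : ℝ) :
    (fun ω ↦ (Y ω - m) ^ 2 / Y ω) =ᵐ[ν] fun ω ↦ (Y ω - 2 * m) + m ^ 2 * (Y ω)⁻¹ := by
  filter_upwards [hYcd] with ω hω
  exact sq_sub_div_eq m (hc.trans_le hω.1).ne'

variable [IsProbabilityMeasure ν]

lemma integrable_sq_sub_of_ae_mem_Icc (hY : AEMeasurable Y ν)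
    (hYcd : ∀ᵐ ω ∂ν, Y ω ∈ Set.Icc c d) (m : ℝ) : Integrable (fun ω ↦ (Y ω - m) ^ 2) ν :=
  ((memLp_of_bounded hYcd hY.aestronglyMeasurable 2).sub (memLp_const m)).integrable_sq

variable (hY : AEMeasurable Y ν) (hc : 0 < c) (hYcd : ∀ᵐ ω ∂ν, Y ω ∈ Set.Icc c d)
include hY hc hYcd

lemma integrable_inv_of_ae_mem_Icc : Integrable (fun ω ↦ (Y ω)⁻¹) ν := by
  refine .of_mem_Icc d⁻¹ c⁻¹ hY.inv (hYcd.mono fun ω hω ↦ ?_)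
  exact ⟨inv_anti₀ (hc.trans_le hω.1) hω.2, inv_anti₀ hc hω.1⟩

lemma integrable_sq_sub_div (m : ℝ) : Integrable (fun ω ↦ (Y ω - m) ^ 2 / Y ω) ν :=
  .congr (((Integrable.of_mem_Icc c d hY hYcd).sub (integrable_const (2 * m))).add
    ((integrable_inv_of_ae_mem_Icc hY hc hYcd).const_mul _)) (sq_sub_div_ae_eq hc hYcd m).symm

lemma integral_inv_sub_inv_integral :
    ∫ ω, (Y ω)⁻¹ ∂ν - (ν[Y])⁻¹ = (ν[Y])⁻¹ ^ 2 * ∫ ω, (Y ω - ν[Y]) ^ 2 / Y ω ∂ν := by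
  have hYi : Integrable Y ν := .of_mem_Icc c d hY hYcd
  have hm : ν[Y] ≠ 0 :=
    (hc.trans_le ((convex_Icc c d).integral_mem isClosed_Icc hYcd hYi).1).ne'
  rw [integral_congr_ae (sq_sub_div_ae_eq hc hYcd _),
    integral_add (f := fun ω ↦ Y ω - 2 * ν[Y]) (hYi.sub (integrable_const _))
      ((integrable_inv_of_ae_mem_Icc hY hc hYcd).const_mul _),
    integral_sub hYi (integrable_const _)]
  simp only [integral_const_mul, integral_const, probReal_univ, one_smul]
  field_simp
  ring

lemma integral_inv_sub_inv_integral_le :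
    ∫ ω, (Y ω)⁻¹ ∂ν - (ν[Y])⁻¹ ≤ (ν[Y])⁻¹ ^ 2 * (Var[Y; ν] / c) := by
  rw [integral_inv_sub_inv_integral hY hc hYcd, variance_eq_integral hY, ← integral_div]
  gcongr ?_ * ?_
  refine integral_mono_ae (integrable_sq_sub_div hY hc hYcd _)
    ((integrable_sq_sub_of_ae_mem_Icc hY hYcd _).div_const _) ?_
  filter_upwards [hYcd] with ω hω
  exact div_le_div_of_nonneg_left (sq_nonneg _) hc hω.1

lemma le_integral_inv_sub_inv_integral :
    (ν[Y])⁻¹ ^ 2 * (Var[Y; ν] / d) ≤ ∫ ω, (Y ω)⁻¹ ∂ν - (ν[Y])⁻¹ := by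
  rw [integral_inv_sub_inv_integral hY hc hYcd, variance_eq_integral hY, ← integral_div]
  gcongr ?_ * ?_
  refine integral_mono_ae ((integrable_sq_sub_of_ae_mem_Icc hY hYcd _).div_const _)
    (integrable_sq_sub_div hY hc hYcd _) ?_
  filter_upwards [hYcd] with ω hω
  exact div_le_div_of_nonneg_left (sq_nonneg _) (hc.trans_le hω.1) hω.2

end InverseJensenGap

section SampleMean

variable {α ι : Type*} [MeasurableSpace α] {μ : Measure α} [IsProbabilityMeasure μ]
  [Fintype ι] {f : α → ℝ}

lemma variance_pi_sum_div_card (hf : MemLp f 2 μ) :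
    Var[fun x ↦ (∑ i, f (x i)) / Fintype.card ι; Measure.pi fun _ : ι ↦ μ]
      = Var[f; μ] / Fintype.card ι := by
  rcases isEmpty_or_nonempty ι with hι | hι
  · simp only [Finset.univ_eq_empty, Finset.sum_empty, Fintype.card_eq_zero, CharP.cast_eq_zero,
      div_zero]
    exact variance_zero _
  have hcard : (Fintype.card ι : ℝ) ≠ 0 := by exact_mod_cast Fintype.card_ne_zero
  have hsum := variance_sum_pi (μ := fun _ : ι ↦ μ) (X := fun _ ↦ f) fun _ ↦ hf
  simp only [Finset.sum_const, Finset.card_univ, nsmul_eq_mul, Finset.sum_fn] at hsum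
  simp_rw [div_eq_mul_inv, variance_mul_const, hsum]
  field_simp

variable [Nonempty ι]

lemma integral_pi_sum_div_card (hf : Integrable f μ) :
    ∫ x, (∑ i, f (x i)) / Fintype.card ι ∂(Measure.pi fun _ : ι ↦ μ) = ∫ y, f y ∂μ := by
  have hcomp (i : ι) : ∫ x, f (x i) ∂(Measure.pi fun _ : ι ↦ μ) = ∫ y, f y ∂μ :=
    integral_comp_eval (μ := fun _ ↦ μ) hf.aestronglyMeasurable
  rw [integral_div, integral_finsetSum _ fun i _ ↦ integrable_comp_eval (μ := fun _ ↦ μ) hf]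
  simp [hcomp]

lemma ae_pi_sum_div_card_mem_Icc {c d : ℝ} (hf : ∀ᵐ y ∂μ, f y ∈ Set.Icc c d) :
    ∀ᵐ x ∂(Measure.pi fun _ : ι ↦ μ), (∑ i, f (x i)) / Fintype.card ι ∈ Set.Icc c d := by
  have hcard : (0 : ℝ) < Fintype.card ι := by exact_mod_cast Fintype.card_pos
  filter_upwards [Filter.eventually_all.2 fun i ↦
    Measure.tendsto_eval_ae_ae (i := i) |>.eventually hf] with x hx
  rw [Set.mem_Icc, le_div_iff₀ hcard, div_le_iff₀ hcard]
  constructor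
  · simpa [mul_comm] using
      Finset.card_nsmul_le_sum Finset.univ (fun i ↦ f (x i)) c fun i _ ↦ (hx i).1
  · simpa [mul_comm] using
      Finset.sum_le_card_nsmul Finset.univ (fun i ↦ f (x i)) d fun i _ ↦ (hx i).2

end SampleMean

/-- Harmonic mean estimate (Theorem 5.1 of the paper, first moment, first part):
`0 < 𝔼(M_n) - h ≤ b h² σ₂ / n`. -/
theorem stmt_9 (a b : ℝ) (ha : 0 < a) (hab : a ≤ b)
    (μ : Measure ℝ) [IsProbabilityMeasure μ] (hsupp : μ (Set.Icc a b) = 1)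
    (h σ2 : ℝ) (hh : h = (∫ x, x⁻¹ ∂μ)⁻¹)
    (hσ2 : σ2 = ∫ x, (x⁻¹ - h⁻¹) ^ 2 ∂μ) (hσpos : 0 < σ2)
    (n : ℕ) (hn : 1 ≤ n) :
    0 < (∫ x, (n : ℝ) / (∑ j, (x j)⁻¹) ∂(Measure.pi fun _ : Fin n => μ)) - h ∧
    (∫ x, (n : ℝ) / (∑ j, (x j)⁻¹) ∂(Measure.pi fun _ : Fin n => μ)) - h
      ≤ b * h ^ 2 * σ2 / n := by
  have hb : 0 < b := ha.trans_le hab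
  have : Nonempty (Fin n) := Fin.pos_iff_nonempty.1 hn
  have hinv_mem : ∀ᵐ x ∂μ, x⁻¹ ∈ Set.Icc b⁻¹ a⁻¹ := by
    filter_upwards [(mem_ae_iff_prob_eq_one measurableSet_Icc).2 hsupp] with x hx
    exact ⟨inv_anti₀ (ha.trans_le hx.1) hx.2, inv_anti₀ ha hx.1⟩
  have hinv_int : Integrable (fun x : ℝ ↦ x⁻¹) μ :=
    .of_mem_Icc _ _ measurable_inv.aemeasurable hinv_mem
  have hh_inv : ∫ x, x⁻¹ ∂μ = h⁻¹ := by rw [hh, inv_inv]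
  have hh_pos : 0 < h := by
    rw [hh]
    exact inv_pos.2 ((inv_pos.2 hb).trans_le
      ((convex_Icc _ _).integral_mem isClosed_Icc hinv_mem hinv_int).1)
  set Y : (Fin n → ℝ) → ℝ := fun x ↦ (∑ j, (x j)⁻¹) / Fintype.card (Fin n)
  have hY : AEMeasurable Y (Measure.pi fun _ : Fin n => μ) := by fun_prop
  have hY_mem := ae_pi_sum_div_card_mem_Icc (ι := Fin n) hinv_mem
  have hY_mean : ∫ x, Y x ∂(Measure.pi fun _ : Fin n => μ) = h⁻¹ :=
    (integral_pi_sum_div_card hinv_int).trans hh_inv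
  have hY_var : Var[Y; Measure.pi fun _ : Fin n => μ] = σ2 / n := by
    rw [variance_pi_sum_div_card (memLp_of_bounded hinv_mem measurable_inv.aestronglyMeasurable 2),
      variance_eq_integral measurable_inv.aemeasurable, hh_inv, hσ2, Fintype.card_fin]
  have hM : ∫ x, (n : ℝ) / (∑ j, (x j)⁻¹) ∂(Measure.pi fun _ : Fin n => μ)
      = ∫ x, (Y x)⁻¹ ∂(Measure.pi fun _ : Fin n => μ) := by
    simp [Y, inv_div]
  have hlower := le_integral_inv_sub_inv_integral hY (inv_pos.2 hb) hY_mem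
  have hupper := integral_inv_sub_inv_integral_le hY (inv_pos.2 hb) hY_mem
  rw [hY_mean, inv_inv, hY_var] at hlower hupper
  rw [hM]
  refine ⟨lt_of_lt_of_le (by positivity) hlower, hupper.trans_eq ?_⟩
  field_simp
end

section
/- Fix reals 0 < a ≤ b and a Borel probability measure μ on ℝ with μ([a,b]) = 1. Then there exists a constant C > 0 (depending only on μ) such that for every n ≥ 1: |∫ M_n dμⁿ − h − h³·σ₂/n| ≤ C/n². -/
/-!
With `Y = x⁻¹` the harmonic mean is `Ȳ⁻¹`, where `Ȳ = m + T / n` is the sample mean of `Y`,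
`m = 𝔼 Y = h⁻¹`, and `T` is a sum of `n` i.i.d. copies of `Y - m`. Expanding
`(m + u)⁻¹ = m⁻¹ - u / m² + u² / m³ - u³ / m⁴ + u⁴ / (m⁴ (m + u))` and inserting the moments
`𝔼 T = 0`, `𝔼 T² = n σ₂`, `𝔼 T³ = n κ₃`, `𝔼 T⁴ = n κ₄ + 3 n (n - 1) σ₂²` (`κₖ = 𝔼 (Y - m)ᵏ`)
gives `𝔼 Ȳ⁻¹ = m⁻¹ + σ₂ / (n m³) + O(n⁻²)`: the cubic term is `κ₃ / (n² m⁴)` and, since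
`Ȳ ≥ b⁻¹`, the remainder is at most `b 𝔼 T⁴ / (n⁴ m⁴) = O(n⁻²)`. The moments of `T` follow by
induction on `n`, splitting off one coordinate and expanding binomially.
-/

open MeasureTheory ProbabilityTheory Finset

lemma inv_add_eq_sum_add {m u : ℝ} (hm : m ≠ 0) (hmu : m + u ≠ 0) (N : ℕ) :
    (m + u)⁻¹ = ∑ k ∈ range N, (-u) ^ k / m ^ (k + 1) + (-u) ^ N / (m ^ N * (m + u)) := by
  induction N with
  | zero => simp
  | succ N ih =>
    rw [ih, sum_range_succ, add_assoc]
    congr 1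
    field_simp
    ring

lemma abs_inv_add_sub_sum_le {m u c : ℝ} (hm : 0 < m) (hc : 0 < c) (hcmu : c ≤ m + u) (N : ℕ) :
    |(m + u)⁻¹ - ∑ k ∈ range N, (-u) ^ k / m ^ (k + 1)| ≤ |u| ^ N / (m ^ N * c) := by
  have hmu : 0 < m + u := hc.trans_le hcmu
  rw [inv_add_eq_sum_add hm.ne' hmu.ne' N, add_sub_cancel_left, abs_div, abs_pow, abs_neg,
    abs_of_pos (by positivity : 0 < m ^ N * (m + u))]
  gcongr

section Moments

variable {α : Type*} [MeasurableSpace α] {μ : Measure α} [IsProbabilityMeasure μ]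
  {f : α → ℝ} {B : ℝ}

lemma integrable_pow_of_ae_abs_le {β : Type*} [MeasurableSpace β] {ν : Measure β}
    [IsFiniteMeasure ν] {g : β → ℝ} (hg : Measurable g) (hgB : ∀ᵐ y ∂ν, |g y| ≤ B) (k : ℕ) :
    Integrable (fun y => g y ^ k) ν :=
  Integrable.of_bound (hg.pow_const k).aestronglyMeasurable (B ^ k) <| by
    filter_upwards [hgB] with y hy
    rw [Real.norm_eq_abs, abs_pow]
    exact pow_le_pow_left₀ (abs_nonneg _) hy k

lemma ae_forall_pi {p : α → Prop} (hp : ∀ᵐ y ∂μ, p y) (n : ℕ) :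
    ∀ᵐ x ∂(Measure.pi fun _ : Fin n => μ), ∀ i, p (x i) :=
  ae_all_iff.2 fun i =>
    (Measure.tendsto_eval_ae_ae (μ := fun _ : Fin n => μ) (i := i)).eventually hp

lemma ae_le_sum_div_pi {Y : α → ℝ} {c : ℝ} (hYc : ∀ᵐ y ∂μ, c ≤ Y y) {n : ℕ} (hn : 0 < n) :
    ∀ᵐ x ∂(Measure.pi fun _ : Fin n => μ), c ≤ (∑ i, Y (x i)) / n := by
  filter_upwards [ae_forall_pi hYc n] with x hx
  rw [le_div_iff₀ (by exact_mod_cast hn)]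
  calc c * n = ∑ _i : Fin n, c := by simp [mul_comm]
    _ ≤ ∑ i, Y (x i) := sum_le_sum fun i _ => hx i

lemma ae_abs_sum_le_pi (hfB : ∀ᵐ y ∂μ, |f y| ≤ B) (n : ℕ) :
    ∀ᵐ x ∂(Measure.pi fun _ : Fin n => μ), |∑ i, f (x i)| ≤ n * B := by
  filter_upwards [ae_forall_pi hfB n] with x hx
  calc |∑ i, f (x i)| ≤ ∑ i, |f (x i)| := abs_sum_le_sum_abs _ _
    _ ≤ ∑ _i : Fin n, B := sum_le_sum fun i _ => hx i
    _ = n * B := by simp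

lemma integrable_sum_pow_pi (hf : Measurable f) (hfB : ∀ᵐ y ∂μ, |f y| ≤ B) (n k : ℕ) :
    Integrable (fun x => (∑ i, f (x i)) ^ k) (Measure.pi fun _ : Fin n => μ) :=
  integrable_pow_of_ae_abs_le (Finset.measurable_sum _ fun i _ => hf.comp (measurable_pi_apply i))
    (ae_abs_sum_le_pi hfB n) k

lemma integral_sum_pow_pi_succ (hf : Measurable f) (hfB : ∀ᵐ y ∂μ, |f y| ≤ B) (n k : ℕ) :
    ∫ x, (∑ i, f (x i)) ^ k ∂(Measure.pi fun _ : Fin (n + 1) => μ)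
      = ∑ j ∈ range (k + 1), k.choose j * (∫ y, f y ^ j ∂μ) *
          ∫ x, (∑ i, f (x i)) ^ (k - j) ∂(Measure.pi fun _ : Fin n => μ) := by
  have hfirst : ∫ x, (∑ i, f (x i)) ^ k ∂(Measure.pi fun _ : Fin (n + 1) => μ)
      = ∫ z, (f z.1 + ∑ i, f (z.2 i)) ^ k ∂(μ.prod (Measure.pi fun _ : Fin n => μ)) := by
    rw [← (measurePreserving_piFinSuccAbove (fun _ : Fin (n + 1) => μ) 0).integral_comp']
    congr 1 with x
    rw [Fin.sum_univ_succ]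
    rfl
  have hbinom : ∀ z : α × (Fin n → α), (f z.1 + ∑ i, f (z.2 i)) ^ k
      = ∑ j ∈ range (k + 1), k.choose j * (f z.1 ^ j * (∑ i, f (z.2 i)) ^ (k - j)) := by
    intro z
    rw [add_pow]
    exact sum_congr rfl fun j _ => by ring
  simp only [hfirst, hbinom]
  rw [integral_finsetSum _ fun j _ => ((integrable_pow_of_ae_abs_le hf hfB j).mul_prod
    (integrable_sum_pow_pi hf hfB n (k - j))).const_mul _]
  refine sum_congr rfl fun j _ => ?_
  rw [integral_const_mul, mul_assoc,
    integral_prod_mul (fun y => f y ^ j) fun x : Fin n → α => (∑ i, f (x i)) ^ (k - j)]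

variable (hf : Measurable f) (hfB : ∀ᵐ y ∂μ, |f y| ≤ B) (hf0 : ∫ y, f y ∂μ = 0)
include hf hfB hf0

lemma integral_sum_pi_eq_zero :
    ∀ n : ℕ, ∫ x, ∑ i, f (x i) ∂(Measure.pi fun _ : Fin n => μ) = 0
  | 0 => by simp
  | n + 1 => by
    simpa [sum_range_succ, hf0, integral_sum_pi_eq_zero n] using
      integral_sum_pow_pi_succ hf hfB n 1

lemma integral_sum_sq_pi :
    ∀ n : ℕ, ∫ x, (∑ i, f (x i)) ^ 2 ∂(Measure.pi fun _ : Fin n => μ)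
      = n * ∫ y, f y ^ 2 ∂μ
  | 0 => by simp
  | n + 1 => by
    rw [integral_sum_pow_pi_succ hf hfB n 2]
    simp [sum_range_succ, hf0, integral_sum_pi_eq_zero hf hfB hf0 n, integral_sum_sq_pi n]
    ring

lemma integral_sum_pow_three_pi :
    ∀ n : ℕ, ∫ x, (∑ i, f (x i)) ^ 3 ∂(Measure.pi fun _ : Fin n => μ)
      = n * ∫ y, f y ^ 3 ∂μ
  | 0 => by simp
  | n + 1 => by
    rw [integral_sum_pow_pi_succ hf hfB n 3]
    simp [sum_range_succ, hf0, integral_sum_pi_eq_zero hf hfB hf0 n,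
      integral_sum_sq_pi hf hfB hf0 n, integral_sum_pow_three_pi n]
    ring

lemma integral_sum_pow_four_pi :
    ∀ n : ℕ, ∫ x, (∑ i, f (x i)) ^ 4 ∂(Measure.pi fun _ : Fin n => μ)
      = n * ∫ y, f y ^ 4 ∂μ + 3 * n * (n - 1) * (∫ y, f y ^ 2 ∂μ) ^ 2
  | 0 => by simp
  | n + 1 => by
    rw [integral_sum_pow_pi_succ hf hfB n 4]
    simp [sum_range_succ, hf0, integral_sum_pi_eq_zero hf hfB hf0 n,
      integral_sum_sq_pi hf hfB hf0 n, integral_sum_pow_three_pi hf hfB hf0 n,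
      integral_sum_pow_four_pi n, Nat.choose]
    ring

lemma integral_sum_inv_taylor_pi (m : ℝ) (n : ℕ) :
    ∫ x, ∑ k ∈ range 4, (-((∑ i, f (x i)) / n)) ^ k / m ^ (k + 1)
        ∂(Measure.pi fun _ : Fin n => μ)
      = m⁻¹ + (∫ y, f y ^ 2 ∂μ) / (n * m ^ 3) - (∫ y, f y ^ 3 ∂μ) / (n ^ 2 * m ^ 4) := by
  have hpoly : ∀ x : Fin n → α, ∑ k ∈ range 4, (-((∑ i, f (x i)) / n)) ^ k / m ^ (k + 1)
      = ∑ k ∈ range 4, (-1) ^ k / (n ^ k * m ^ (k + 1)) * (∑ i, f (x i)) ^ k :=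
    fun x => sum_congr rfl fun k _ => by ring
  simp only [hpoly]
  rw [integral_finsetSum _ fun k _ => (integrable_sum_pow_pi hf hfB n k).const_mul _]
  simp only [integral_const_mul]
  simp [sum_range_succ, integral_sum_pi_eq_zero hf hfB hf0 n, integral_sum_sq_pi hf hfB hf0 n,
    integral_sum_pow_three_pi hf hfB hf0 n]
  field_simp
  ring

lemma abs_integral_inv_add_sub_le {m c : ℝ} (hm : 0 < m) (hc : 0 < c) {n : ℕ} (hn : 1 ≤ n)
    (hmean : ∀ᵐ x ∂(Measure.pi fun _ : Fin n => μ), c ≤ m + (∑ i, f (x i)) / n) :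
    |∫ x, (m + (∑ i, f (x i)) / n)⁻¹ ∂(Measure.pi fun _ : Fin n => μ)
        - (m⁻¹ + (∫ y, f y ^ 2 ∂μ) / (n * m ^ 3) - (∫ y, f y ^ 3 ∂μ) / (n ^ 2 * m ^ 4))|
      ≤ (∫ y, f y ^ 4 ∂μ + 3 * (∫ y, f y ^ 2 ∂μ) ^ 2) / c / (m ^ 4 * n ^ 2) := by
  set π := Measure.pi fun _ : Fin n => μ
  set T : (Fin n → α) → ℝ := fun x => ∑ i, f (x i)
  set P : (Fin n → α) → ℝ := fun x => ∑ k ∈ range 4, (-(T x / n)) ^ k / m ^ (k + 1)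
  have hP_int : Integrable P π :=
    integrable_finsetSum _ fun k _ =>
      ((integrable_sum_pow_pi hf hfB n k).const_mul ((-1) ^ k / (n ^ k * m ^ (k + 1)))).congr
        (Filter.Eventually.of_forall fun x => by simp only [T]; ring)
  have hinv_int : Integrable (fun x => (m + T x / n)⁻¹) π := by
    refine Integrable.of_bound (by fun_prop) c⁻¹ ?_
    filter_upwards [hmean] with x hx
    rw [Real.norm_eq_abs, abs_inv, abs_of_pos (hc.trans_le hx)]
    exact inv_anti₀ hc hx
  have hrem : ∀ᵐ x ∂π, |(m + T x / n)⁻¹ - P x| ≤ T x ^ 4 / (n ^ 4 * m ^ 4 * c) := by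
    filter_upwards [hmean] with x hx
    calc _ ≤ |T x / n| ^ 4 / (m ^ 4 * c) := abs_inv_add_sub_sum_le hm hc hx 4
      _ = _ := by rw [Even.pow_abs (by decide), div_pow]; field_simp
  rw [← integral_sum_inv_taylor_pi hf hfB hf0, ← integral_sub hinv_int hP_int]
  calc _ ≤ ∫ x, |(m + T x / n)⁻¹ - P x| ∂π := abs_integral_le_integral_abs
    _ ≤ ∫ x, T x ^ 4 / (n ^ 4 * m ^ 4 * c) ∂π :=
      integral_mono_ae (hinv_int.sub hP_int).abs
        ((integrable_sum_pow_pi hf hfB n 4).div_const _) hrem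
    _ = (n * ∫ y, f y ^ 4 ∂μ + 3 * n * (n - 1) * (∫ y, f y ^ 2 ∂μ) ^ 2)
          / (n ^ 4 * m ^ 4 * c) := by
      rw [integral_div, integral_sum_pow_four_pi hf hfB hf0 n]
    _ = (∫ y, f y ^ 4 ∂μ + 3 * (n - 1) * (∫ y, f y ^ 2 ∂μ) ^ 2) / n / c / (m ^ 4 * n ^ 2) := by
      field_simp
    _ ≤ _ := by
      have hf4 : 0 ≤ ∫ y, f y ^ 4 ∂μ := integral_nonneg fun y => by positivity
      have hn1 : (1 : ℝ) ≤ n := by exact_mod_cast hn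
      gcongr
      rw [div_le_iff₀ (by positivity)]
      nlinarith [sq_nonneg (∫ y, f y ^ 2 ∂μ)]

end Moments

theorem abs_integral_inv_sampleMean_sub_le {α : Type*} [MeasurableSpace α] {μ : Measure α}
    [IsProbabilityMeasure μ] {Y : α → ℝ} {c d : ℝ} (hY : Measurable Y) (hc : 0 < c)
    (hYcd : ∀ᵐ y ∂μ, Y y ∈ Set.Icc c d) {n : ℕ} (hn : 1 ≤ n) :
    |∫ x, ((∑ i, Y (x i)) / n)⁻¹ ∂(Measure.pi fun _ : Fin n => μ) - (μ[Y])⁻¹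
        - Var[Y; μ] / (n * μ[Y] ^ 3)|
      ≤ ((centralMoment Y 4 μ + 3 * Var[Y; μ] ^ 2) / c + |centralMoment Y 3 μ|)
          / (μ[Y] ^ 4 * n ^ 2) := by
  set m := μ[Y]
  set f : α → ℝ := fun y => Y y - m
  have hYabs : ∀ᵐ y ∂μ, |Y y| ≤ d := by
    filter_upwards [hYcd] with y hy
    rw [abs_of_pos (hc.trans_le hy.1)]
    exact hy.2
  have hYint : Integrable Y μ := by simpa using integrable_pow_of_ae_abs_le hY hYabs 1
  have hm : 0 < m := hc.trans_le <| by
    calc c = ∫ _, c ∂μ := by simp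
      _ ≤ m := integral_mono_ae (integrable_const c) hYint <| by
        filter_upwards [hYcd] with y hy using hy.1
  have hfB : ∀ᵐ y ∂μ, |f y| ≤ d + m := by
    filter_upwards [hYabs] with y hy
    exact (abs_sub _ _).trans (by rw [abs_of_pos hm]; linarith)
  have hf0 : ∫ y, f y ∂μ = 0 := by
    rw [integral_sub hYint (integrable_const m), integral_const, probReal_univ, one_smul, sub_self]
  have hmean : ∀ x : Fin n → α, (∑ i, Y (x i)) / n = m + (∑ i, f (x i)) / n := by
    intro x
    simp only [f, sum_sub_distrib, sum_const, card_univ, Fintype.card_fin, nsmul_eq_mul]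
    field_simp
    ring
  have hvar : Var[Y; μ] = ∫ y, f y ^ 2 ∂μ := variance_eq_integral hY.aemeasurable
  have hc3 : centralMoment Y 3 μ = ∫ y, f y ^ 3 ∂μ := rfl
  have hc4 : centralMoment Y 4 μ = ∫ y, f y ^ 4 ∂μ := rfl
  have hrem := abs_integral_inv_add_sub_le (hY.sub_const m) hfB hf0 hm hc hn
    ((ae_le_sum_div_pi (hYcd.mono fun _ hy => hy.1) hn).mono fun x hx => hmean x ▸ hx)
  rw [← hvar, ← hc3, ← hc4] at hrem
  simp only [hmean]
  calc _ = |(∫ x, (m + (∑ i, f (x i)) / n)⁻¹ ∂(Measure.pi fun _ : Fin n => μ)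
            - (m⁻¹ + Var[Y; μ] / (n * m ^ 3) - centralMoment Y 3 μ / (n ^ 2 * m ^ 4)))
          - centralMoment Y 3 μ / (m ^ 4 * n ^ 2)| := by
        congr 1; ring
    _ ≤ _ := (abs_sub _ _).trans <| by
        rw [add_div, abs_div, abs_of_pos (by positivity : (0 : ℝ) < m ^ 4 * n ^ 2)]
        exact add_le_add_left hrem _

/-- Harmonic mean estimate (Theorem 5.1 of the paper, first moment, second part):
`|𝔼(M_n) - h - h³σ₂/n| ≤ C/n²` for a constant `C` depending only on `μ`. -/
theorem stmt_10 (a b : ℝ) (ha : 0 < a) (hab : a ≤ b)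
    (μ : Measure ℝ) [IsProbabilityMeasure μ] (hsupp : μ (Set.Icc a b) = 1)
    (h σ2 : ℝ) (hh : h = (∫ x, x⁻¹ ∂μ)⁻¹)
    (hσ2 : σ2 = ∫ x, (x⁻¹ - h⁻¹) ^ 2 ∂μ) :
    ∃ C : ℝ, 0 < C ∧ ∀ n : ℕ, 1 ≤ n →
      |(∫ x, (n : ℝ) / (∑ j, (x j)⁻¹) ∂(Measure.pi fun _ : Fin n => μ)) - h
          - h ^ 3 * σ2 / n| ≤ C / (n : ℝ) ^ 2 := by
  have hb : 0 < b := ha.trans_le hab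
  have hIcc : ∀ᵐ x ∂μ, x ∈ Set.Icc a b :=
    (ae_iff_measure_eq measurableSet_Icc.nullMeasurableSet).2 (by rw [measure_univ]; exact hsupp)
  have hinv : ∀ᵐ x ∂μ, x⁻¹ ∈ Set.Icc b⁻¹ a⁻¹ := by
    filter_upwards [hIcc] with x hx
    exact ⟨inv_anti₀ (ha.trans_le hx.1) hx.2, inv_anti₀ ha hx.1⟩
  have hσ : σ2 = Var[fun x => x⁻¹; μ] := by
    rw [hσ2, variance_eq_integral measurable_inv.aemeasurable, hh, inv_inv]
  set m := ∫ x, x⁻¹ ∂μ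
  set K := ((centralMoment (fun x => x⁻¹) 4 μ + 3 * Var[fun x => x⁻¹; μ] ^ 2) / b⁻¹
    + |centralMoment (fun x => x⁻¹) 3 μ|) / m ^ 4
  refine ⟨|K| + 1, by positivity, fun n hn => ?_⟩
  calc _ = |∫ x, ((∑ i, (x i)⁻¹) / n)⁻¹ ∂(Measure.pi fun _ : Fin n => μ) - m⁻¹
          - Var[fun x => x⁻¹; μ] / (n * m ^ 3)| := by
        simp only [inv_div, hh, hσ]; congr 2; ring
    _ ≤ K / n ^ 2 :=
        (abs_integral_inv_sampleMean_sub_le measurable_inv (inv_pos.2 hb) hinv hn).trans_eq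
          (div_div _ _ _).symm
    _ ≤ (|K| + 1) / n ^ 2 := by gcongr; linarith [le_abs_self K]
end

section
/- Fix reals 0 < a ≤ b and a Borel probability measure μ on ℝ with μ([a,b]) = 1. Then for every n ≥ 1: a²·h²·σ₂/n ≤ ∫ (M_n − h)² dμⁿ ≤ b²·h²·σ₂/n. -/
/-!
Let `S̄ = (∑ⱼ xⱼ⁻¹) / n` be the sample mean of the `xⱼ⁻¹` and `m = h⁻¹ = 𝔼 x⁻¹`, so that
`M_n = S̄⁻¹`. Since `S̄⁻¹ - m⁻¹ = S̄⁻¹ m⁻¹ (m - S̄)`, we have `(M_n - h)² = M_n² h² (S̄ - m)²`, and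
`M_n ∈ [a, b]` pointwise. The coordinates are independent under `μⁿ`, so
`𝔼 (S̄ - m)² = Var[x⁻¹] / n = σ₂ / n`, and integrating the pointwise bounds gives the estimate.
-/

open MeasureTheory ProbabilityTheory Set

lemma integral_mem_Icc_of_ae_mem_Icc_mul {α : Type*} [MeasurableSpace α] {μ : Measure α}
    {F G : α → ℝ} {c d : ℝ} (hF : AEStronglyMeasurable F μ) (hG : Integrable G μ)
    (hFG : ∀ᵐ x ∂μ, F x ∈ Icc (c * G x) (d * G x)) :
    ∫ x, F x ∂μ ∈ Icc (c * ∫ x, G x ∂μ) (d * ∫ x, G x ∂μ) := by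
  have hF_int := integrable_of_le_of_le hF (hFG.mono fun _ hx => hx.1)
    (hFG.mono fun _ hx => hx.2) (hG.const_mul c) (hG.const_mul d)
  rw [← integral_const_mul, ← integral_const_mul]
  exact ⟨integral_mono_ae (hG.const_mul c) hF_int (hFG.mono fun _ hx => hx.1),
    integral_mono_ae hF_int (hG.const_mul d) (hFG.mono fun _ hx => hx.2)⟩

lemma inv_mem_Icc_iff₀ {a b y : ℝ} (ha : 0 < a) (hb : 0 < b) :
    y⁻¹ ∈ Icc a b ↔ y ∈ Icc b⁻¹ a⁻¹ := by
  constructor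
  · rintro ⟨hay, hyb⟩
    have hy : 0 < y := inv_pos.mp (ha.trans_le hay)
    exact ⟨(inv_le_comm₀ hy hb).1 hyb, (le_inv_comm₀ ha hy).1 hay⟩
  · rintro ⟨hby, hya⟩
    have hy : 0 < y := (inv_pos.mpr hb).trans_le hby
    exact ⟨(le_inv_comm₀ ha hy).2 hya, (inv_le_comm₀ hy hb).2 hby⟩

lemma harmonicMean_mem_Icc {ι : Type*} [Fintype ι] [Nonempty ι] {a b : ℝ} (ha : 0 < a)
    (hab : a ≤ b) {x : ι → ℝ} (hx : ∀ j, x j ∈ Icc a b) :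
    ((∑ j, (x j)⁻¹) / Fintype.card ι)⁻¹ ∈ Icc a b := by
  have hb := ha.trans_le hab
  have hinv (j : ι) : (x j)⁻¹ ∈ Icc b⁻¹ a⁻¹ :=
    (inv_mem_Icc_iff₀ ha hb).1 (by rw [inv_inv]; exact hx j)
  rw [inv_mem_Icc_iff₀ ha hb, ← Fintype.expect_eq_sum_div_card]
  exact ⟨Finset.le_expect Finset.univ_nonempty fun j _ => (hinv j).1,
    Finset.expect_le Finset.univ_nonempty fun j _ => (hinv j).2⟩

lemma sq_inv_sub_inv_mem_Icc {a b u v : ℝ} (ha : 0 < a) (hu : u⁻¹ ∈ Icc a b) (hv : v ≠ 0) :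
    (u⁻¹ - v⁻¹) ^ 2 ∈
      Icc (a ^ 2 * (v⁻¹) ^ 2 * (u - v) ^ 2) (b ^ 2 * (v⁻¹) ^ 2 * (u - v) ^ 2) := by
  have hu0 : u ≠ 0 := (inv_pos.mp (ha.trans_le hu.1)).ne'
  have hid : (u⁻¹ - v⁻¹) ^ 2 = (u⁻¹) ^ 2 * ((v⁻¹) ^ 2 * (u - v) ^ 2) := by
    field_simp
    ring
  rw [hid, mul_assoc, mul_assoc]
  exact ⟨by gcongr; exact hu.1, by gcongr; exacts [(ha.trans_le hu.1).le, hu.2]⟩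

section SampleMean

variable {Ω : Type*} [MeasurableSpace Ω] {μ : Measure Ω} [IsProbabilityMeasure μ] {f : Ω → ℝ}
  {n : ℕ}

lemma memLp_sampleMean (hf : MemLp f 2 μ) :
    MemLp (fun x : Fin n → Ω => (∑ j, f (x j)) / n) 2 (Measure.pi fun _ => μ) := by
  simp_rw [div_eq_mul_inv]
  refine MemLp.mul_const ?_ _
  exact memLp_finsetSum (Finset.univ : Finset (Fin n))
    fun j _ => hf.comp_measurePreserving (measurePreserving_eval (fun _ => μ) j)

lemma integral_sampleMean (hn : n ≠ 0) (hf : Integrable f μ) :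
    ∫ x : Fin n → Ω, (∑ j, f (x j)) / n ∂(Measure.pi fun _ => μ) = μ[f] := by
  rw [integral_div, integral_finsetSum _ fun j _ => integrable_comp_eval hf]
  simp [integral_comp_eval (μ := fun _ : Fin n => μ) hf.aestronglyMeasurable, hn]

lemma variance_sampleMean (hf : MemLp f 2 μ) :
    Var[fun x : Fin n → Ω => (∑ j, f (x j)) / n; Measure.pi fun _ => μ] = Var[f; μ] / n := by
  have hsum := variance_sum_pi (μ := fun _ : Fin n => μ) (X := fun _ => f) fun _ => hf
  simp only [Finset.sum_fn, Finset.sum_const, Finset.card_univ, Fintype.card_fin,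
    nsmul_eq_mul] at hsum
  simp_rw [div_eq_mul_inv, variance_mul_const, hsum]
  rcases eq_or_ne n 0 with rfl | hn
  · simp
  · field_simp

lemma integral_sq_sampleMean_sub (hn : n ≠ 0) (hf : MemLp f 2 μ) :
    ∫ x : Fin n → Ω, ((∑ j, f (x j)) / n - μ[f]) ^ 2 ∂(Measure.pi fun _ => μ) =
      Var[f; μ] / n := by
  rw [← variance_sampleMean hf,
    variance_eq_integral (memLp_sampleMean hf).aestronglyMeasurable.aemeasurable,
    integral_sampleMean hn (hf.integrable one_le_two)]

lemma integrable_sq_sampleMean_sub (hf : MemLp f 2 μ) (c : ℝ) :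
    Integrable (fun x : Fin n → Ω => ((∑ j, f (x j)) / n - c) ^ 2) (Measure.pi fun _ => μ) :=
  ((memLp_sampleMean hf).sub (memLp_const c)).integrable_sq

end SampleMean

section SupportedOnIcc

variable {a b : ℝ} {μ : Measure ℝ}

lemma ae_inv_mem_Icc (ha : 0 < a) (hab : a ≤ b) (hae : ∀ᵐ x ∂μ, x ∈ Icc a b) :
    ∀ᵐ x ∂μ, x⁻¹ ∈ Icc b⁻¹ a⁻¹ :=
  hae.mono fun x hx => (inv_mem_Icc_iff₀ ha (ha.trans_le hab)).1 (by rwa [inv_inv])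

lemma memLp_inv [IsFiniteMeasure μ] (ha : 0 < a) (hab : a ≤ b)
    (hae : ∀ᵐ x ∂μ, x ∈ Icc a b) : MemLp (fun x : ℝ => x⁻¹) 2 μ :=
  MemLp.of_bound measurable_inv.aestronglyMeasurable a⁻¹ <|
    (ae_inv_mem_Icc ha hab hae).mono fun x hx => by
      rw [Real.norm_of_nonneg ((inv_pos.2 (ha.trans_le hab)).le.trans hx.1)]
      exact hx.2

lemma integral_inv_mem_Icc [IsProbabilityMeasure μ] (ha : 0 < a) (hab : a ≤ b)
    (hae : ∀ᵐ x ∂μ, x ∈ Icc a b) : ∫ x, x⁻¹ ∂μ ∈ Icc b⁻¹ a⁻¹ :=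
  (convex_Icc _ _).integral_mem isClosed_Icc (ae_inv_mem_Icc ha hab hae)
    ((memLp_inv ha hab hae).integrable one_le_two)

lemma ae_sq_harmonicMean_sub_mem_Icc [SigmaFinite μ] (ha : 0 < a) (hab : a ≤ b)
    (hae : ∀ᵐ x ∂μ, x ∈ Icc a b) {v : ℝ} (hv : v ≠ 0) (n : ℕ) [NeZero n] :
    ∀ᵐ x ∂(Measure.pi fun _ : Fin n => μ), ((n : ℝ) / (∑ j, (x j)⁻¹) - v⁻¹) ^ 2 ∈
      Icc (a ^ 2 * (v⁻¹) ^ 2 * ((∑ j, (x j)⁻¹) / n - v) ^ 2)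
        (b ^ 2 * (v⁻¹) ^ 2 * ((∑ j, (x j)⁻¹) / n - v) ^ 2) := by
  filter_upwards [Filter.eventually_all.2 fun j : Fin n =>
    (Measure.tendsto_eval_ae_ae (i := j)).eventually hae] with x hx
  have hM := harmonicMean_mem_Icc ha hab hx
  rw [Fintype.card_fin] at hM
  simpa only [inv_div] using sq_inv_sub_inv_mem_Icc ha hM hv

end SupportedOnIcc

/-- Harmonic mean estimate (Theorem 5.1 of the paper, second moment):
`a²h²σ₂/n ≤ 𝔼((M_n - h)²) ≤ b²h²σ₂/n`. -/
theorem stmt_11 (a b : ℝ) (ha : 0 < a) (hab : a ≤ b)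
    (μ : Measure ℝ) [IsProbabilityMeasure μ] (hsupp : μ (Set.Icc a b) = 1)
    (h σ2 : ℝ) (hh : h = (∫ x, x⁻¹ ∂μ)⁻¹)
    (hσ2 : σ2 = ∫ x, (x⁻¹ - h⁻¹) ^ 2 ∂μ)
    (n : ℕ) (hn : 1 ≤ n) :
    a ^ 2 * h ^ 2 * σ2 / n
        ≤ ∫ x, ((n : ℝ) / (∑ j, (x j)⁻¹) - h) ^ 2 ∂(Measure.pi fun _ : Fin n => μ) ∧
    (∫ x, ((n : ℝ) / (∑ j, (x j)⁻¹) - h) ^ 2 ∂(Measure.pi fun _ : Fin n => μ))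
        ≤ b ^ 2 * h ^ 2 * σ2 / n := by
  have : NeZero n := ⟨by omega⟩
  have hae : ∀ᵐ x ∂μ, x ∈ Icc a b :=
    (ae_iff_measure_eq measurableSet_Icc.nullMeasurableSet).2 (hsupp.trans measure_univ.symm)
  have hmean : h⁻¹ = ∫ x, x⁻¹ ∂μ := by rw [hh, inv_inv]
  have hmean_pos : 0 < h⁻¹ :=
    (inv_pos.2 (ha.trans_le hab)).trans_le (hmean ▸ integral_inv_mem_Icc ha hab hae).1
  have hvar : Var[fun x : ℝ => x⁻¹; μ] = σ2 := by
    rw [variance_eq_integral measurable_inv.aemeasurable, hσ2, hmean]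
  have hG := integral_sq_sampleMean_sub (NeZero.ne n) (memLp_inv ha hab hae)
  rw [hvar, ← hmean] at hG
  have hbounds := integral_mem_Icc_of_ae_mem_Icc_mul
    (Measurable.aestronglyMeasurable (by fun_prop))
    (integrable_sq_sampleMean_sub (memLp_inv ha hab hae) h⁻¹)
    (ae_sq_harmonicMean_sub_mem_Icc ha hab hae hmean_pos.ne' n)
  rwa [hG, inv_inv, ← mul_div_assoc, ← mul_div_assoc] at hbounds
end

section
/- Let (Ω, 𝒜, ℙ) be a probability space, K > 0, m̄ ∈ ℝ, s : ℕ → ℕ with s(n) ≥ 1 for all n, and suppose s(n) ≥ c·n^α for all n ≥ 1, for some constants c > 0 and α > 0. Let (X_{n,j})_{n∈ℕ, 0 ≤ j < s(n)} be a family of real random variables on Ω which are independent (as a family indexed by the sigma type Σ n, Fin s(n)), identically distributed, measurable, satisfy |X_{n,j}| ≤ K almost surely, and have common mean 𝔼[X_{n,j}] = m̄. Then ℙ-almost surely, the row averages s(n)⁻¹ · ∑_{j < s(n)} X_{n,j} converge to m̄ as n → ∞. -/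
open MeasureTheory ProbabilityTheory Filter Real Topology Asymptotics
open scoped NNReal ENNReal

/-!
By Hoeffding's inequality, the `n`-th centred row sum exceeds `s(n) ε` in absolute value with
probability at most `2 exp (-s(n) ε² / (2K²))`. Since `s(n) ≥ c n^α`, these bounds are summable
in `n`, so by Borel–Cantelli almost surely only finitely many row averages are `ε`-far from
`m̄`; intersecting over `ε = 1/(k+1)` gives almost sure convergence.
-/

lemma summable_exp_neg_mul_rpow {b α : ℝ} (hb : 0 < b) (hα : 0 < α) :
    Summable fun n : ℕ => exp (-(b * (n : ℝ) ^ α)) := by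
  have hdecay : Tendsto (fun n : ℕ => ((n : ℝ) ^ α) ^ (2 / α) * exp (-b * (n : ℝ) ^ α))
      atTop (𝓝 0) :=
    (tendsto_rpow_mul_exp_neg_mul_atTop_nhds_zero _ b hb).comp
      ((tendsto_rpow_atTop hα).comp tendsto_natCast_atTop_atTop)
  refine summable_of_isBigO_nat (Real.summable_nat_pow_inv.2 one_lt_two) ?_
  refine ((isBigO_refl (fun n : ℕ => ((n : ℝ) ^ 2)⁻¹) atTop).mul
    (hdecay.isBigO_one ℝ)).congr' ?_ (by simp)
  filter_upwards [eventually_ge_atTop 1] with n hn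
  have hn : (0 : ℝ) < n := by exact_mod_cast hn
  rw [← rpow_mul hn.le, mul_div_cancel₀ _ hα.ne', rpow_two, neg_mul,
    inv_mul_cancel_left₀ (by positivity)]

lemma summable_exp_neg_mul_of_rpow_le {f : ℕ → ℝ} {b c α : ℝ} (hb : 0 < b) (hc : 0 < c)
    (hα : 0 < α) (hf : ∀ n : ℕ, 1 ≤ n → c * (n : ℝ) ^ α ≤ f n) :
    Summable fun n => exp (-(b * f n)) := by
  refine (summable_exp_neg_mul_rpow (mul_pos hb hc) hα).of_norm_bounded_eventually_nat ?_
  filter_upwards [eventually_ge_atTop 1] with n hn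
  rw [norm_of_nonneg (exp_pos _).le, exp_le_exp, neg_le_neg_iff, mul_assoc]
  exact mul_le_mul_of_nonneg_left (hf n hn) hb.le

section

variable {Ω : Type*} [MeasurableSpace Ω] {μ : Measure Ω}

lemma ae_tendsto_of_summable_measureReal_le_abs_sub [IsFiniteMeasure μ] {Z : ℕ → Ω → ℝ}
    {a : ℝ} (h : ∀ ε > 0, Summable fun n => μ.real {ω | ε ≤ |Z n ω - a|}) :
    ∀ᵐ ω ∂μ, Tendsto (fun n => Z n ω) atTop (𝓝 a) := by
  have hclose : ∀ ε > 0, ∀ᵐ ω ∂μ, ∀ᶠ n in atTop, |Z n ω - a| < ε := fun ε hε => by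
    have hfin : ∑' n, μ {ω | ε ≤ |Z n ω - a|} ≠ ∞ := by
      rw [show (fun n => μ {ω | ε ≤ |Z n ω - a|}) = fun n => ENNReal.ofReal
          (μ.real {ω | ε ≤ |Z n ω - a|}) from funext fun _ =>
          (ofReal_measureReal (measure_ne_top μ _)).symm,
        ← ENNReal.ofReal_tsum_of_nonneg (fun _ => measureReal_nonneg) (h ε hε)]
      exact ENNReal.ofReal_ne_top
    filter_upwards [ae_eventually_notMem hfin] with ω hω
    simpa using hω
  have hall : ∀ᵐ ω ∂μ, ∀ k : ℕ, ∀ᶠ n in atTop, |Z n ω - a| < 1 / ((k : ℝ) + 1) :=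
    ae_all_iff.2 fun k => hclose _ Nat.one_div_pos_of_nat
  filter_upwards [hall] with ω hω
  refine Metric.tendsto_nhds.2 fun ε hε => ?_
  obtain ⟨k, hk⟩ := exists_nat_one_div_lt hε
  exact (hω k).mono fun n hn => hn.trans hk

lemma measureReal_le_abs_sum_le_of_iIndepFun [IsFiniteMeasure μ] {ι : Type*}
    {Y : ι → Ω → ℝ} (hindep : iIndepFun Y μ) {c : ℝ≥0} {T : Finset ι}
    (hY : ∀ i ∈ T, HasSubgaussianMGF (Y i) c μ) {ε : ℝ} (hε : 0 ≤ ε) :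
    μ.real {ω | ε ≤ |∑ i ∈ T, Y i ω|} ≤ 2 * exp (-ε ^ 2 / (2 * (T.card * c))) := by
  have hneg : iIndepFun (fun i ω => -Y i ω) μ :=
    hindep.comp (fun _ x => -x) fun _ => measurable_neg
  have hupper := HasSubgaussianMGF.measure_sum_ge_le_of_iIndepFun hindep hY hε
  have hlower :=
    HasSubgaussianMGF.measure_sum_ge_le_of_iIndepFun hneg (fun i hi => (hY i hi).neg) hε
  simp only [Finset.sum_const, nsmul_eq_mul] at hupper hlower
  push_cast at hupper hlower
  calc μ.real {ω | ε ≤ |∑ i ∈ T, Y i ω|}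
      ≤ μ.real ({ω | ε ≤ ∑ i ∈ T, Y i ω} ∪ {ω | ε ≤ ∑ i ∈ T, -Y i ω}) := by
        refine measureReal_mono fun ω (hω : ε ≤ |∑ i ∈ T, Y i ω|) => ?_
        rcases le_abs'.1 hω with h | h
        · exact Or.inr (by simpa [Finset.sum_neg_distrib] using le_neg_of_le_neg h)
        · exact Or.inl h
    _ ≤ _ := (measureReal_union_le _ _).trans (by linarith)

lemma mul_le_abs_of_le_abs_inv_mul {N ε S : ℝ} (hN : 0 ≤ N) (h : ε ≤ |N⁻¹ * S|) :
    N * ε ≤ |S| := by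
  rcases hN.eq_or_lt with rfl | hN
  · simp
  · rwa [abs_mul, abs_inv, abs_of_pos hN, le_inv_mul_iff₀ hN] at h

theorem ae_tendsto_rowAverage_of_hasSubgaussianMGF [IsFiniteMeasure μ] {ι : ℕ → Type*}
    [∀ n, Fintype (ι n)] {Y : (Σ n, ι n) → Ω → ℝ} (hindep : iIndepFun Y μ) {c : ℝ≥0}
    (hc : 0 < c) (hY : ∀ i, HasSubgaussianMGF (Y i) c μ)
    (hrows : ∀ b > 0, Summable fun n => exp (-(b * Fintype.card (ι n)))) :
    ∀ᵐ ω ∂μ, Tendsto (fun n => (Fintype.card (ι n) : ℝ)⁻¹ * ∑ j, Y ⟨n, j⟩ ω) atTop (𝓝 0) := by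
  refine ae_tendsto_of_summable_measureReal_le_abs_sub fun ε hε => ?_
  refine ((hrows _ (by positivity : 0 < ε ^ 2 / (2 * c))).mul_left 2).of_nonneg_of_le
    (fun _ => measureReal_nonneg) fun n => ?_
  set N : ℝ := (Fintype.card (ι n) : ℝ)
  let T := (Finset.univ : Finset (ι n)).map ⟨Sigma.mk n, sigma_mk_injective⟩
  have hT : ∀ ω, ∑ j, Y ⟨n, j⟩ ω = ∑ i ∈ T, Y i ω := fun ω => by simp [T]
  have hcard : (T.card : ℝ) = N := by simp [T, N]
  calc μ.real {ω | ε ≤ |N⁻¹ * ∑ j, Y ⟨n, j⟩ ω - 0|}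
      ≤ μ.real {ω | N * ε ≤ |∑ i ∈ T, Y i ω|} :=
        measureReal_mono fun ω (hω : ε ≤ |N⁻¹ * ∑ j, Y ⟨n, j⟩ ω - 0|) => by
          rw [sub_zero] at hω
          show N * ε ≤ |∑ i ∈ T, Y i ω|
          rw [← hT]
          exact mul_le_abs_of_le_abs_inv_mul (Nat.cast_nonneg _) hω
    _ ≤ 2 * exp (-(N * ε) ^ 2 / (2 * (T.card * c))) :=
        measureReal_le_abs_sum_le_of_iIndepFun hindep (fun i _ => hY i) (by positivity)
    _ = 2 * exp (-(ε ^ 2 / (2 * c) * N)) := by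
        rw [hcard]
        rcases eq_or_ne N 0 with hN | hN
        · simp [hN]
        · congr 2
          field_simp

end

theorem stmt_14_general {Ω : Type*} [MeasurableSpace Ω] (P : Measure Ω) [IsProbabilityMeasure P]
    (K : ℝ) (hK : 0 < K) (mbar : ℝ) (c α : ℝ) (hc : 0 < c) (hα : 0 < α)
    (s : ℕ → ℕ)
    (hgrow : ∀ n : ℕ, 1 ≤ n → c * (n : ℝ) ^ α ≤ (s n : ℝ))
    (X : (Σ n : ℕ, Fin (s n)) → Ω → ℝ)
    (hmeas : ∀ i, Measurable (X i))
    (hindep : iIndepFun X P)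
    (hbdd : ∀ i, ∀ᵐ ω ∂P, |X i ω| ≤ K)
    (hmean : ∀ i, (∫ ω, X i ω ∂P) = mbar) :
    ∀ᵐ ω ∂P, Tendsto (fun n : ℕ => (s n : ℝ)⁻¹ * ∑ j : Fin (s n), X ⟨n, j⟩ ω)
      atTop (nhds mbar) := by
  have hsub : ∀ i, HasSubgaussianMGF (fun ω => X i ω - mbar) ((‖K - -K‖₊ / 2) ^ 2) P :=
    fun i => hmean i ▸ hasSubgaussianMGF_of_mem_Icc (hmeas i).aemeasurable
      (by filter_upwards [hbdd i] with ω h using abs_le.1 h)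
  have hpos : (0 : ℝ≥0) < (‖K - -K‖₊ / 2) ^ 2 := by
    have : K - -K ≠ 0 := by linarith
    exact pow_pos (div_pos (nnnorm_pos.2 this) two_pos) 2
  have hcentred := ae_tendsto_rowAverage_of_hasSubgaussianMGF
    (hindep.comp (fun _ x => x - mbar) fun _ => measurable_id.sub_const mbar) hpos hsub
    fun b hb => by simpa using summable_exp_neg_mul_of_rpow_le hb hc hα hgrow
  filter_upwards [hcentred] with ω hω
  refine (by simpa using hω.add_const mbar : Tendsto _ atTop (𝓝 mbar)).congr' ?_
  filter_upwards [eventually_ge_atTop 1] with n hn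
  have hs : (s n : ℝ) ≠ 0 := (lt_of_lt_of_le (by positivity) (hgrow n hn)).ne'
  rw [mul_sub, inv_mul_cancel_left₀ hs, sub_add_cancel]

/-- Strong law for triangular arrays with polynomially growing row sizes (Lemma 4.2 of
the paper): if `(X_{n,j})` is an i.i.d. family of bounded real random variables with
mean `m̄`, and `s(n) ≥ c n^α`, then the row averages converge almost surely to `m̄`. -/
theorem stmt_14 {Ω : Type*} [MeasurableSpace Ω] (P : Measure Ω) [IsProbabilityMeasure P]
    (K : ℝ) (hK : 0 < K) (mbar : ℝ) (c α : ℝ) (hc : 0 < c) (hα : 0 < α)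
    (s : ℕ → ℕ) (hs : ∀ n, 1 ≤ s n)
    (hgrow : ∀ n : ℕ, 1 ≤ n → c * (n : ℝ) ^ α ≤ (s n : ℝ))
    (X : (Σ n : ℕ, Fin (s n)) → Ω → ℝ)
    (hmeas : ∀ i, Measurable (X i))
    (hindep : iIndepFun X P)
    (hident : ∀ i j, IdentDistrib (X i) (X j) P P)
    (hbdd : ∀ i, ∀ᵐ ω ∂P, |X i ω| ≤ K)
    (hmean : ∀ i, (∫ ω, X i ω ∂P) = mbar) :
    ∀ᵐ ω ∂P, Tendsto (fun n : ℕ => (s n : ℝ)⁻¹ * ∑ j : Fin (s n), X ⟨n, j⟩ ω)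
      atTop (nhds mbar) :=
  stmt_14_general P K hK mbar c α hc hα s hgrow X hmeas hindep hbdd hmean
end

section
/- Let d ≥ 1, n ≥ 1 and 0 ≤ k < d be integers. Then the number of x ∈ ℤ^d (functions Fin d → ℤ) with ‖x‖₁ = n and exactly k coordinates equal to 0 is C(d, k) · 2^{d−k} · C(n−1, d−k−1), where C denotes the binomial coefficient. -/
/-!
A point whose zero set is a given `S` with `#S = k` is the same as a nowhere-vanishing vector
on the `d - k` coordinates outside `S`. Recording the sign and the absolute value of each
coordinate, such a vector of ℓ¹-norm `n` is a choice of `d - k` signs together with a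
composition of `n` into `d - k` positive parts; subtracting one from every part and applying
stars and bars counts these compositions as `C(n - 1, d - k - 1)`.
-/

open Finset

section

variable {ι : Type*} [Fintype ι]

theorem card_sum_eq_choose (m : ℕ) :
    Nat.card {f : ι → ℕ // ∑ i, f i = m} = (Fintype.card ι + m - 1).choose m := by
  classical
  rw [← Nat.card_congr (Sym.equivNatSumOfFintype ι m), Nat.card_eq_fintype_card,
    Sym.card_sym_eq_choose]

def posPartsEquiv (n : ℕ) :
    {g : ι → ℕ // ∑ i, g i + Fintype.card ι = n} ≃
      {f : ι → ℕ // (∀ i, f i ≠ 0) ∧ ∑ i, f i = n} where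
  toFun g := ⟨g.1 + 1, fun i => by simp, by simp [sum_add_distrib, g.2]⟩
  invFun f := ⟨f.1 - 1, by
    have hf : ∀ i, (f.1 - 1) i + 1 = f.1 i := fun i => Nat.succ_pred_eq_of_ne_zero (f.2.1 i)
    have : ∑ i, ((f.1 - 1) i + 1) = n := by simp_rw [hf]; exact f.2.2
    simpa [sum_add_distrib] using this⟩
  left_inv g := by ext; simp
  right_inv f := by ext i; exact Nat.succ_pred_eq_of_ne_zero (f.2.1 i)

theorem card_pos_sum_eq_choose [Nonempty ι] {n : ℕ} (hn : n ≠ 0) :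
    Nat.card {f : ι → ℕ // (∀ i, f i ≠ 0) ∧ ∑ i, f i = n} =
      (n - 1).choose (Fintype.card ι - 1) := by
  have hι := Fintype.card_pos (α := ι)
  rw [← Nat.card_congr (posPartsEquiv n)]
  by_cases h : Fintype.card ι ≤ n
  · have : {g : ι → ℕ // ∑ i, g i + Fintype.card ι = n} =
        {g : ι → ℕ // ∑ i, g i = n - Fintype.card ι} := by
      congr! 2; omega
    rw [this, card_sum_eq_choose, show Fintype.card ι + (n - Fintype.card ι) - 1 = n - 1 by omega]
    exact Nat.choose_symm_of_eq_add (by omega)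
  · rw [Nat.choose_eq_zero_of_lt (by omega), Nat.card_eq_zero]
    exact .inl ⟨fun ⟨g, hg⟩ => by omega⟩

def signAbsEquiv (n : ℕ) :
    {y : ι → ℤ // (∀ i, y i ≠ 0) ∧ ∑ i, |y i| = n} ≃
      (ι → Bool) × {f : ι → ℕ // (∀ i, f i ≠ 0) ∧ ∑ i, f i = n} where
  toFun y := (fun i => decide (0 < y.1 i), ⟨fun i => (y.1 i).natAbs,
    fun i => Int.natAbs_ne_zero.2 (y.2.1 i), by
      have := y.2.2
      simp only [← Int.natCast_natAbs] at this
      exact_mod_cast this⟩)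
  invFun p := ⟨fun i => if p.1 i then (p.2.1 i : ℤ) else -p.2.1 i,
    fun i => by cases h : p.1 i <;> simp [h, p.2.2.1 i], by
      have : ∀ i, |if p.1 i then (p.2.1 i : ℤ) else -p.2.1 i| = p.2.1 i := fun i => by
        split <;> simp
      simp_rw [this]
      exact_mod_cast p.2.2.2⟩
  left_inv y := by
    ext i
    rcases (y.2.1 i).lt_or_gt with h | h
    · simp [h.not_gt, abs_of_neg h]
    · simp [h, h.le]
  right_inv p := by
    ext i
    · have := p.2.2.1 i
      cases h : p.1 i <;> simp [h, Nat.pos_of_ne_zero this]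
    · cases h : p.1 i <;> simp [h]

variable [DecidableEq ι]

theorem sum_coe_compl_of_eq_zero {M : Type*} [AddCommMonoid M] {S : Finset ι} {f : ι → M}
    (hf : ∀ i ∈ S, f i = 0) : ∑ i : ↥Sᶜ, f i = ∑ i, f i := by
  rw [sum_coe_sort, ← sum_compl_add_sum S, sum_eq_zero hf, add_zero]

def zeroSetFiberEquiv (S : Finset ι) (n : ℤ) :
    {x : ι → ℤ // univ.filter (fun i => x i = 0) = S ∧ ∑ i, |x i| = n} ≃
      {y : ↥Sᶜ → ℤ // (∀ i, y i ≠ 0) ∧ ∑ i, |y i| = n} where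
  toFun x := ⟨fun i => x.1 i, fun i hi =>
    mem_compl.1 i.2 ((Finset.ext_iff.1 x.2.1 i).1 (by simpa using hi)), by
    rw [sum_coe_compl_of_eq_zero (f := fun i => |x.1 i|), x.2.2]
    exact fun i hi => by simpa using (Finset.ext_iff.1 x.2.1 i).2 hi⟩
  invFun y := ⟨fun i => if h : i ∈ S then 0 else y.1 ⟨i, mem_compl.2 h⟩, by
    ext i
    by_cases h : i ∈ S <;> simp [h, y.2.1], by
    rw [← sum_coe_compl_of_eq_zero (S := S) fun i hi => by simp [hi]]
    refine (sum_congr rfl fun i _ => ?_).trans y.2.2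
    simp [mem_compl.1 i.2]⟩
  left_inv x := by
    ext i
    by_cases h : i ∈ S
    · rw [← x.2.1] at h
      simp_all
    · simp [h]
  right_inv y := by ext i; simp [mem_compl.1 i.2]

theorem card_zeroSet_fiber {S : Finset ι} {k n : ℕ} (hS : #S = k) (hk : k < Fintype.card ι)
    (hn : n ≠ 0) :
    Nat.card {x : ι → ℤ // univ.filter (fun i => x i = 0) = S ∧ ∑ i, |x i| = n} =
      2 ^ (Fintype.card ι - k) * (n - 1).choose (Fintype.card ι - k - 1) := by
  have : Nonempty ↥Sᶜ := card_pos.1 (by rw [card_compl]; omega) |>.coe_sort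
  rw [Nat.card_congr ((zeroSetFiberEquiv S n).trans (signAbsEquiv n)), Nat.card_prod,
    card_pos_sum_eq_choose hn, Nat.card_fun]
  simp [hS]

theorem finite_abs_sum_eq (n : ℤ) : {x : ι → ℤ | ∑ i, |x i| = n}.Finite := by
  refine (Set.finite_Icc (fun _ => -n) fun _ => n).subset fun x hx => ?_
  have : ∀ i, |x i| ≤ n := fun i => hx ▸ single_le_sum (fun j _ => abs_nonneg (x j)) (mem_univ i)
  exact ⟨fun i => (abs_le.1 (this i)).1, fun i => (abs_le.1 (this i)).2⟩

def zeroSetSigmaEquiv (n : ℤ) (k : ℕ) :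
    {x : ι → ℤ // ∑ i, |x i| = n ∧ #(univ.filter fun i => x i = 0) = k} ≃
      Σ S : {S : Finset ι // #S = k},
        {x : ι → ℤ // univ.filter (fun i => x i = 0) = S ∧ ∑ i, |x i| = n} where
  toFun x := ⟨⟨_, x.2.2⟩, x.1, rfl, x.2.1⟩
  invFun p := ⟨p.2.1, p.2.2.2, by rw [p.2.2.1]; exact p.1.2⟩
  left_inv x := rfl
  right_inv := by
    rintro ⟨⟨S, hS⟩, ⟨x, hxS, hx⟩⟩
    cases hxS
    rfl

end

theorem stmt_18_general (d n k : ℕ) (hn : 1 ≤ n) (hk : k < d) :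
    {x : Fin d → ℤ | (∑ i, |x i|) = (n : ℤ) ∧
        (Finset.univ.filter fun i => x i = 0).card = k}.ncard
      = Nat.choose d k * 2 ^ (d - k) * Nat.choose (n - 1) (d - k - 1) := by
  have hfin (S : {S : Finset (Fin d) // #S = k}) :
      Finite {x : Fin d → ℤ // univ.filter (fun i => x i = 0) = S ∧ ∑ i, |x i| = n} :=
    ((finite_abs_sum_eq n).subset fun x hx => hx.2).to_subtype
  rw [← Nat.card_coe_set_eq, Set.coe_ofPred, Nat.card_congr (zeroSetSigmaEquiv n k),
    Nat.card_sigma]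
  simp_rw [fun S : {S : Finset (Fin d) // #S = k} =>
    card_zeroSet_fiber S.2 (by simpa using hk) (by omega : n ≠ 0)]
  rw [sum_const, card_univ, Fintype.card_finset_len, smul_eq_mul, Fintype.card_fin, mul_assoc]

/-- The number of points on the ℓ¹-sphere of radius `n ≥ 1` in `ℤ^d` with exactly `k`
vanishing coordinates is `C(d,k)·2^{d-k}·C(n-1, d-k-1)` (Section 7 of the paper). -/
theorem stmt_18 (d n k : ℕ) (hd : 1 ≤ d) (hn : 1 ≤ n) (hk : k < d) :
    {x : Fin d → ℤ | (∑ i, |x i|) = (n : ℤ) ∧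
        (Finset.univ.filter fun i => x i = 0).card = k}.ncard
      = Nat.choose d k * 2 ^ (d - k) * Nat.choose (n - 1) (d - k - 1) :=
  stmt_18_general d n k hn hk
end

section
/- Let d ≥ 1. For n ∈ ℕ let s_n := #{x ∈ ℤ^d : ‖x‖₁ = n} and let α_n := #{(x, y) ∈ ℤ^d × ℤ^d : ‖x‖₁ = n, ‖y‖₁ = n+1, ‖x − y‖₁ = 1} be the number of edges between consecutive ℓ¹-spheres. Then there exists a constant C > 0 such that for every n ≥ 1: | α_n / √(s_n · s_{n+1}) − d | ≤ C / n². -/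
/-!
Each `x ∈ S_n` has `d + #{i | x i = 0}` neighbours in `S_{n+1}` and each `y ∈ S_{n+1}` has
`#{i | y i ≠ 0}` neighbours in `S_n`. The points of `S_n` with a prescribed zero coordinate form a
copy of the sphere of `ℤ^{d-1}`, so double counting the edges gives `α_n = d (s_n + s'_n)` and
`s_{n+1} = s_n + s'_n + s'_{n+1}`, where `s'` counts spheres in `ℤ^{d-1}`. Hence
`(α_n / d)² - s_n s_{n+1} = s'_n² - s_n (s'_{n+1} - s'_n)`, and the growth bounds
`s_n ≳ n^{d-1}`, `s'_n ≲ n^{d-2}`, `s'_{n+1} - s'_n ≲ n^{d-3}` make the relative error `O(n⁻²)`.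
-/

open Finset

theorem card_filter_univ_prod {α β : Type*} [Fintype α] [Fintype β] (P : α → β → Prop)
    [∀ a b, Decidable (P a b)] : #{p : α × β | P p.1 p.2} = ∑ a, #{b | P a b} := by
  simp only [card_filter, Fintype.sum_prod_type]

theorem card_Icc_pi_const (k : ℕ) (a b : ℤ) :
    #(Icc (fun _ : Fin k => a) (fun _ => b)) = (b + 1 - a).toNat ^ k := by
  simp [Pi.card_Icc]

theorem abs_div_sqrt_mul_sub_one_le {A P B : ℝ} (hA : 0 < A) (hP : 0 ≤ P) (hAB : A ≤ B) :
    |(A + P) / √(A * B) - 1| ≤ |(A + P) ^ 2 - A * B| / A ^ 2 := by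
  set g := √(A * B)
  have hgA : A ≤ g := Real.le_sqrt_of_sq_le (by nlinarith)
  have hg2 : g ^ 2 = A * B := Real.sq_sqrt (by nlinarith)
  have hg : 0 < g := hA.trans_le hgA
  have hdiff : (A + P) / g - 1 = ((A + P) ^ 2 - A * B) / ((A + P + g) * g) := by
    rw [← hg2]
    field_simp
    ring
  have hden : 0 < (A + P + g) * g := mul_pos (by linarith) hg
  rw [hdiff, abs_div, abs_of_pos hden]
  exact div_le_div_of_nonneg_left (abs_nonneg _) (by positivity) (by nlinarith)

theorem abs_div_sqrt_mul_sub_one_le_of_bounds {A P B n c₁ c₂ : ℝ} (hA : 0 < A) (hP : 0 ≤ P)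
    (hAB : A ≤ B) (hn : 0 < n) (hPA : n * P ≤ c₁ * A) (hBA : n ^ 2 * |B - A - 2 * P| ≤ c₂ * A) :
    |(A + P) / √(A * B) - 1| ≤ (c₁ ^ 2 + c₂) / n ^ 2 := by
  refine (abs_div_sqrt_mul_sub_one_le hA hP hAB).trans ?_
  rw [div_le_div_iff₀ (by positivity) (by positivity)]
  calc |(A + P) ^ 2 - A * B| * n ^ 2 = |P ^ 2 - A * (B - A - 2 * P)| * n ^ 2 := by ring_nf
    _ ≤ (P ^ 2 + A * |B - A - 2 * P|) * n ^ 2 := by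
        gcongr
        refine (abs_sub _ _).trans_eq ?_
        rw [abs_mul, abs_of_nonneg (sq_nonneg P), abs_of_pos hA]
    _ = (n * P) ^ 2 + A * (n ^ 2 * |B - A - 2 * P|) := by ring
    _ ≤ (c₁ * A) ^ 2 + A * (c₂ * A) := by gcongr
    _ = (c₁ ^ 2 + c₂) * A ^ 2 := by ring

namespace L1Sphere

local notation "‖" x "‖₁" => ∑ i, |x i|

variable {k : ℕ}

noncomputable def sphere (k n : ℕ) : Finset (Fin k → ℤ) :=
  {x ∈ Icc (fun _ => -(n : ℤ)) (fun _ => (n : ℤ)) | ‖x‖₁ = n}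

theorem abs_le_l1 (x : Fin k → ℤ) (i : Fin k) : |x i| ≤ ‖x‖₁ :=
  single_le_sum (fun j _ => abs_nonneg (x j)) (mem_univ i)

theorem mem_sphere {n : ℕ} {x : Fin k → ℤ} : x ∈ sphere k n ↔ ‖x‖₁ = n := by
  refine mem_filter.trans ⟨And.right, fun h => ⟨mem_Icc.mpr ⟨fun i => ?_, fun i => ?_⟩, h⟩⟩
  · exact neg_le_of_abs_le (h ▸ abs_le_l1 x i)
  · exact le_of_abs_le (h ▸ abs_le_l1 x i)

def neighbor (x : Fin k → ℤ) (p : Fin k × ℤˣ) : Fin k → ℤ := x + Pi.single p.1 (p.2 : ℤ)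

theorem neighbor_injective (x : Fin k → ℤ) : Function.Injective (neighbor x) := by
  rintro ⟨i, u⟩ ⟨j, v⟩ h
  obtain rfl : i = j := by
    by_contra hij
    simpa [neighbor, hij] using congrFun h i
  simpa [neighbor, Units.val_inj] using congrFun h i

theorem l1_neighbor (x : Fin k → ℤ) (p : Fin k × ℤˣ) :
    ‖neighbor x p‖₁ = ‖x‖₁ + (|x p.1 + p.2| - |x p.1|) := by
  obtain ⟨i, u⟩ := p
  have hrest : ∑ j ∈ univ.erase i, |neighbor x (i, u) j| = ∑ j ∈ univ.erase i, |x j| :=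
    sum_congr rfl fun j hj => by simp [neighbor, ne_of_mem_erase hj]
  rw [← add_sum_erase _ _ (mem_univ i), ← add_sum_erase _ (fun j => |x j|) (mem_univ i), hrest]
  simp only [neighbor, Pi.add_apply, Pi.single_eq_same]
  ring

theorem l1_sub_neighbor (x : Fin k → ℤ) (p : Fin k × ℤˣ) : ‖x - neighbor x p‖₁ = 1 := by
  simp [neighbor, Pi.single_apply, apply_ite, Int.isUnit_iff_abs_eq.mp p.2.isUnit]

theorem exists_neighbor_eq_of_l1_sub_eq_one {x y : Fin k → ℤ} (h : ‖x - y‖₁ = 1) :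
    ∃ p, neighbor x p = y := by
  simp only [Pi.sub_apply] at h
  obtain ⟨i, hi⟩ : ∃ i, x i ≠ y i := by
    by_contra! hxy
    simp [hxy] at h
  rw [← add_sum_erase _ _ (mem_univ i)] at h
  have hpos := abs_pos.mpr (sub_ne_zero.mpr hi)
  have hrest := sum_nonneg fun j (_ : j ∈ univ.erase i) => abs_nonneg (x j - y j)
  have hzero : ∀ j ≠ i, x j = y j := fun j hj => by
    have := (sum_eq_zero_iff_of_nonneg fun j _ => abs_nonneg (x j - y j)).mp (by omega) j
      (mem_erase.mpr ⟨hj, mem_univ j⟩)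
    exact sub_eq_zero.mp (abs_eq_zero.mp this)
  have hunit : IsUnit (y i - x i) := Int.isUnit_iff_abs_eq.mpr (by rw [abs_sub_comm]; omega)
  refine ⟨(i, hunit.unit), funext fun j => ?_⟩
  rcases eq_or_ne j i with rfl | hj
  · simp [neighbor]
  · simp [neighbor, hj, hzero j hj]

theorem l1_sub_eq_one_iff {x y : Fin k → ℤ} : ‖x - y‖₁ = 1 ↔ ∃ p, neighbor x p = y :=
  ⟨exists_neighbor_eq_of_l1_sub_eq_one, fun ⟨p, hp⟩ => hp ▸ l1_sub_neighbor x p⟩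

theorem card_filter_sphere_l1_sub_eq_one (x : Fin k → ℤ) (m : ℕ) :
    #{y ∈ sphere k m | ‖x - y‖₁ = 1} =
      #{p : Fin k × ℤˣ | ‖x‖₁ + (|x p.1 + p.2| - |x p.1|) = m} := by
  rw [← card_map ⟨neighbor x, neighbor_injective x⟩]
  congr 1
  ext y
  simp only [mem_filter, mem_sphere, l1_sub_eq_one_iff, mem_map, mem_univ, true_and,
    Function.Embedding.coeFn_mk]
  constructor
  · rintro ⟨hy, p, rfl⟩
    exact ⟨p, l1_neighbor x p ▸ hy, rfl⟩
  · rintro ⟨p, hp, rfl⟩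
    exact ⟨l1_neighbor x p ▸ hp, p, rfl⟩

theorem card_units_abs_add_eq_add_one (v : ℤ) :
    #{u : ℤˣ | |v + u| = |v| + 1} = 1 + if v = 0 then 1 else 0 := by
  rw [card_filter, show (univ : Finset ℤˣ) = {1, -1} from rfl, sum_pair (by decide)]
  simp only [Units.val_one, Units.val_neg]
  rcases abs_cases v with ⟨_, _⟩ | ⟨_, _⟩ <;> rcases abs_cases (v + 1) with ⟨_, _⟩ | ⟨_, _⟩ <;>
    rcases abs_cases (v + -1) with ⟨_, _⟩ | ⟨_, _⟩ <;> split_ifs <;> omega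

theorem card_units_abs_add_add_one_eq (v : ℤ) :
    #{u : ℤˣ | |v + u| + 1 = |v|} = if v = 0 then 0 else 1 := by
  rw [card_filter, show (univ : Finset ℤˣ) = {1, -1} from rfl, sum_pair (by decide)]
  simp only [Units.val_one, Units.val_neg]
  rcases abs_cases v with ⟨_, _⟩ | ⟨_, _⟩ <;> rcases abs_cases (v + 1) with ⟨_, _⟩ | ⟨_, _⟩ <;>
    rcases abs_cases (v + -1) with ⟨_, _⟩ | ⟨_, _⟩ <;> split_ifs <;> omega

theorem card_up_neighbors {n : ℕ} {x : Fin k → ℤ} (hx : ‖x‖₁ = n) :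
    #{y ∈ sphere k (n + 1) | ‖x - y‖₁ = 1} = k + #{i | x i = 0} := by
  have hstep : ∀ p : Fin k × ℤˣ,
      (n : ℤ) + (|x p.1 + p.2| - |x p.1|) = ((n + 1 : ℕ) : ℤ) ↔ |x p.1 + p.2| = |x p.1| + 1 :=
    fun p => by push_cast; constructor <;> intro <;> linarith
  rw [card_filter_sphere_l1_sub_eq_one, hx, filter_congr fun p _ => hstep p,
    card_filter_univ_prod (fun i (u : ℤˣ) => |x i + u| = |x i| + 1)]
  simp only [card_units_abs_add_eq_add_one, sum_add_distrib, ← card_filter]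
  simp

theorem card_down_neighbors {n : ℕ} {y : Fin k → ℤ} (hy : ‖y‖₁ = n + 1) :
    #{x ∈ sphere k n | ‖y - x‖₁ = 1} = #{i | y i ≠ 0} := by
  have hstep : ∀ p : Fin k × ℤˣ,
      (n + 1 : ℤ) + (|y p.1 + p.2| - |y p.1|) = n ↔ |y p.1 + p.2| + 1 = |y p.1| :=
    fun p => by constructor <;> intro <;> linarith
  rw [card_filter_sphere_l1_sub_eq_one, hy, filter_congr fun p _ => hstep p,
    card_filter_univ_prod (fun i (u : ℤˣ) => |y i + u| + 1 = |y i|)]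
  simp only [card_units_abs_add_add_one_eq, card_filter fun i => y i ≠ 0, ite_not]

theorem l1_sub_comm (x y : Fin k → ℤ) : ‖x - y‖₁ = ‖y - x‖₁ := by
  simp only [Pi.sub_apply, abs_sub_comm]

noncomputable def edges (k n : ℕ) : Finset ((Fin k → ℤ) × (Fin k → ℤ)) :=
  {p ∈ sphere k n ×ˢ sphere k (n + 1) | ‖p.1 - p.2‖₁ = 1}

theorem card_edges_eq_sum_fst (k n : ℕ) :
    #(edges k n) = ∑ x ∈ sphere k n, #{y ∈ sphere k (n + 1) | ‖x - y‖₁ = 1} := by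
  simp only [edges, card_filter, sum_product]

theorem card_edges_eq_sum_snd (k n : ℕ) :
    #(edges k n) = ∑ y ∈ sphere k (n + 1), #{x ∈ sphere k n | ‖y - x‖₁ = 1} := by
  simp only [edges, card_filter, sum_product_right, l1_sub_comm]

theorem card_edges_eq (k n : ℕ) :
    #(edges k n) = k * #(sphere k n) + ∑ x ∈ sphere k n, #{i | x i = 0} := by
  rw [card_edges_eq_sum_fst, sum_congr rfl fun x hx => card_up_neighbors (mem_sphere.mp hx),
    sum_add_distrib, sum_const, smul_eq_mul, mul_comm]

theorem card_edges_add_sum_card_zeros (k n : ℕ) :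
    #(edges k n) + ∑ y ∈ sphere k (n + 1), #{i | y i = 0} = k * #(sphere k (n + 1)) := by
  rw [card_edges_eq_sum_snd, sum_congr rfl fun y hy => card_down_neighbors (by
    rw [mem_sphere.mp hy]; push_cast; rfl), ← sum_add_distrib]
  have hsplit : ∀ y : Fin k → ℤ, #{i | y i ≠ 0} + #{i | y i = 0} = k := fun y => by
    rw [add_comm, card_filter_add_card_filter_not, card_univ, Fintype.card_fin]
  simp only [hsplit, sum_const, smul_eq_mul, mul_comm]

theorem card_filter_sphere_apply_eq_zero (k n : ℕ) (i : Fin (k + 1)) :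
    #{x ∈ sphere (k + 1) n | x i = 0} = #(sphere k n) := by
  symm
  refine card_nbij' (fun z => Fin.insertNth (α := fun _ => ℤ) i 0 z)
    (fun x j => x (i.succAbove j)) ?_ ?_ ?_ ?_
  · intro z hz
    simp_all [mem_sphere, Fin.sum_univ_succAbove _ i]
  · intro x hx
    simp only [coe_filter, mem_sphere, Fin.sum_univ_succAbove _ i] at hx
    simpa [mem_sphere, hx.2] using hx.1
  · intro z _
    simp
  · intro x hx
    simp only [coe_filter, Set.mem_ofPred_eq] at hx
    ext j
    rcases Fin.eq_self_or_eq_succAbove i j with rfl | ⟨j, rfl⟩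
    · simp [hx.2]
    · simp

theorem sum_card_zeros (k n : ℕ) :
    ∑ x ∈ sphere (k + 1) n, #{i | x i = 0} = (k + 1) * #(sphere k n) := by
  simp only [card_filter]
  rw [sum_comm]
  simp only [← card_filter, card_filter_sphere_apply_eq_zero, sum_const, card_univ, Fintype.card_fin,
    smul_eq_mul]

theorem card_edges (k n : ℕ) :
    #(edges (k + 1) n) = (k + 1) * (#(sphere (k + 1) n) + #(sphere k n)) := by
  rw [card_edges_eq, sum_card_zeros, mul_add]

theorem card_sphere_succ_succ (k n : ℕ) :
    #(sphere (k + 1) (n + 1)) = #(sphere (k + 1) n) + #(sphere k n) + #(sphere k (n + 1)) := by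
  have h := card_edges_add_sum_card_zeros (k + 1) n
  rw [card_edges, sum_card_zeros, ← mul_add] at h
  exact (Nat.eq_of_mul_eq_mul_left k.succ_pos h).symm

theorem card_sphere_zero {n : ℕ} (hn : n ≠ 0) : #(sphere 0 n) = 0 := by
  rw [card_eq_zero, eq_empty_iff_forall_notMem]
  intro x hx
  simp [mem_sphere] at hx
  omega

-- A point of the sphere is determined by its first `k` coordinates and the sign of the last one.
theorem card_sphere_succ_le (k m : ℕ) : #(sphere (k + 1) m) ≤ 2 * (2 * m + 1) ^ k := by
  let f : (Fin k → ℤ) × ℤˣ → (Fin (k + 1) → ℤ) := fun p =>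
    Fin.snoc (α := fun _ => ℤ) p.1 (p.2 * (m - ‖p.1‖₁))
  have hsub : sphere (k + 1) m ⊆ (Icc (fun _ => -(m : ℤ)) (fun _ => (m : ℤ)) ×ˢ univ).image f := by
    intro x hx
    have hbound : ∀ j, |x j| ≤ m := fun j => mem_sphere.mp hx ▸ abs_le_l1 x j
    have hlast : (m : ℤ) - ‖Fin.init x‖₁ = |x (Fin.last k)| := by
      rw [← mem_sphere.mp hx, Fin.sum_univ_castSucc]
      simp [Fin.init]
    refine mem_image.mpr ⟨(Fin.init x, if 0 ≤ x (Fin.last k) then 1 else -1), ?_, ?_⟩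
    · simp only [mem_product, mem_univ, and_true, mem_Icc]
      exact ⟨fun j => neg_le_of_abs_le (hbound _), fun j => le_of_abs_le (hbound _)⟩
    · conv_rhs => rw [← Fin.snoc_init_self x]
      simp only [f, hlast]
      congr 1
      split_ifs with h
      · simp [abs_of_nonneg h]
      · simp [abs_of_neg (not_le.mp h)]
  calc #(sphere (k + 1) m) ≤ #((Icc (fun _ => -(m : ℤ)) (fun _ => (m : ℤ)) ×ˢ univ).image f) :=
        card_le_card hsub
    _ ≤ #(Icc (fun _ => -(m : ℤ)) (fun _ => (m : ℤ)) ×ˢ (univ : Finset ℤˣ)) := card_image_le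
    _ = 2 * (2 * m + 1) ^ k := by
        rw [card_product, card_Icc_pi_const, mul_comm]
        congr 2
        omega

theorem pow_le_card_sphere_succ (k n : ℕ) : n ^ k ≤ (k + 1) ^ k * #(sphere (k + 1) n) := by
  set m := n / (k + 1)
  have hm : k * m ≤ n := (Nat.mul_le_mul_right m k.le_succ).trans (Nat.mul_div_le n (k + 1))
  have hbox : #(Icc (fun _ : Fin k => (0 : ℤ)) (fun _ => (m : ℤ))) ≤ #(sphere (k + 1) n) := by
    refine card_le_card_of_injOn (fun z => Fin.snoc (α := fun _ => ℤ) z (n - ∑ j, z j))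
      (fun z hz => ?_) (fun z _ z' _ h => by simpa using congrArg Fin.init h)
    simp only [coe_Icc, Set.mem_Icc] at hz
    have hz0 : ∀ j, |z j| = z j := fun j => abs_of_nonneg (hz.1 j)
    have hsum : ∑ j, z j ≤ n := calc
      ∑ j, z j ≤ ∑ _j : Fin k, (m : ℤ) := sum_le_sum fun j _ => hz.2 j
      _ ≤ n := by simpa using (Int.ofNat_le.mpr hm)
    simp [mem_sphere, Fin.sum_univ_castSucc, hz0, abs_of_nonneg (sub_nonneg.mpr hsum)]
  calc n ^ k ≤ ((k + 1) * (m + 1)) ^ k :=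
        Nat.pow_le_pow_left (Nat.lt_mul_div_succ n k.succ_pos).le k
    _ = (k + 1) ^ k * #(Icc (fun _ : Fin k => (0 : ℤ)) (fun _ => (m : ℤ))) := by
        rw [mul_pow, card_Icc_pi_const]
        congr 2
    _ ≤ (k + 1) ^ k * #(sphere (k + 1) n) := Nat.mul_le_mul_left _ hbox

theorem mul_card_sphere_le {k m n : ℕ} (hn : 1 ≤ n) (hnm : n ≤ m) (hmn : m ≤ n + 1) :
    n * #(sphere k m) ≤ 2 * 5 ^ k * n ^ k := by
  cases k with
  | zero => simp [card_sphere_zero (by omega : m ≠ 0)]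
  | succ k =>
    calc n * #(sphere (k + 1) m) ≤ n * (2 * (5 * n) ^ k) :=
          Nat.mul_le_mul_left n ((card_sphere_succ_le k m).trans
            (Nat.mul_le_mul_left 2 (Nat.pow_le_pow_left (by omega) k)))
      _ = 5 ^ k * (2 * n ^ (k + 1)) := by ring
      _ ≤ 5 ^ (k + 1) * (2 * n ^ (k + 1)) :=
          Nat.mul_le_mul_right _ (Nat.pow_le_pow_right (by norm_num) k.le_succ)
      _ = 2 * 5 ^ (k + 1) * n ^ (k + 1) := by ring

theorem mul_card_sphere_le_card_sphere_succ {k n : ℕ} (hn : 1 ≤ n) :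
    n * #(sphere k n) ≤ 2 * 5 ^ k * (k + 1) ^ k * #(sphere (k + 1) n) := calc
  n * #(sphere k n) ≤ 2 * 5 ^ k * n ^ k := mul_card_sphere_le hn le_rfl n.le_succ
  _ ≤ 2 * 5 ^ k * ((k + 1) ^ k * #(sphere (k + 1) n)) :=
      Nat.mul_le_mul_left _ (pow_le_card_sphere_succ k n)
  _ = 2 * 5 ^ k * (k + 1) ^ k * #(sphere (k + 1) n) := by ring

theorem sq_mul_abs_card_sphere_succ_sub_le {k n : ℕ} (hn : 1 ≤ n) :
    (n : ℝ) ^ 2 * |(#(sphere k (n + 1)) : ℝ) - #(sphere k n)| ≤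
      4 * 5 ^ k * (k + 1) ^ k * #(sphere (k + 1) n) := by
  cases k with
  | zero =>
    simp [card_sphere_zero (by omega : n ≠ 0), card_sphere_zero (by omega : n + 1 ≠ 0)]
  | succ k =>
    have hdiff : (#(sphere (k + 1) (n + 1)) : ℝ) - #(sphere (k + 1) n) =
        #(sphere k n) + #(sphere k (n + 1)) := by
      rw [card_sphere_succ_succ]
      push_cast
      ring
    have hnat : n ^ 2 * (#(sphere k n) + #(sphere k (n + 1))) ≤
        4 * 5 ^ (k + 1) * (k + 2) ^ (k + 1) * #(sphere (k + 2) n) := calc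
      n ^ 2 * (#(sphere k n) + #(sphere k (n + 1))) =
          n * (n * #(sphere k n)) + n * (n * #(sphere k (n + 1))) := by ring
      _ ≤ n * (2 * 5 ^ k * n ^ k) + n * (2 * 5 ^ k * n ^ k) :=
          add_le_add (Nat.mul_le_mul_left _ (mul_card_sphere_le hn le_rfl n.le_succ))
            (Nat.mul_le_mul_left _ (mul_card_sphere_le hn n.le_succ le_rfl))
      _ = 4 * 5 ^ k * n ^ (k + 1) := by ring
      _ ≤ 4 * 5 ^ (k + 1) * ((k + 2) ^ (k + 1) * #(sphere (k + 2) n)) :=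
          Nat.mul_le_mul (Nat.mul_le_mul_left _ (Nat.pow_le_pow_right (by norm_num) k.le_succ))
            (pow_le_card_sphere_succ (k + 1) n)
      _ = 4 * 5 ^ (k + 1) * (k + 2) ^ (k + 1) * #(sphere (k + 2) n) := by ring
    rw [hdiff, abs_of_nonneg (by positivity)]
    exact_mod_cast hnat

theorem card_sphere_succ_pos (k n : ℕ) : 0 < #(sphere (k + 1) n) :=
  card_pos.mpr ⟨Pi.single 0 n, by simp [mem_sphere, Pi.single_apply, apply_ite]⟩

theorem ncard_setOf_l1_eq (k n : ℕ) : {x : Fin k → ℤ | ‖x‖₁ = n}.ncard = #(sphere k n) := by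
  rw [← Set.ncard_coe_finset]
  congr
  ext x
  simp [mem_sphere]

theorem ncard_setOf_edges (k n : ℕ) :
    {p : (Fin k → ℤ) × (Fin k → ℤ) |
        ‖p.1‖₁ = n ∧ ‖p.2‖₁ = n + 1 ∧ ∑ i, |p.1 i - p.2 i| = 1}.ncard = #(edges k n) := by
  rw [← Set.ncard_coe_finset]
  congr
  ext p
  simp [edges, mem_sphere, and_assoc]

end L1Sphere

open L1Sphere in
/-- The normalized edge counts between consecutive ℓ¹-spheres in `ℤ^d` satisfy
`|α_n/√(s_n s_{n+1}) - d| ≤ C/n²` (Section 7 of the paper). -/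
theorem stmt_19 (d : ℕ) (hd : 1 ≤ d)
    (s : ℕ → ℕ)
    (hsdef : ∀ n : ℕ, s n = {x : Fin d → ℤ | (∑ i, |x i|) = (n : ℤ)}.ncard)
    (αe : ℕ → ℕ)
    (hαdef : ∀ n : ℕ, αe n = {p : (Fin d → ℤ) × (Fin d → ℤ) |
        (∑ i, |p.1 i|) = (n : ℤ) ∧ (∑ i, |p.2 i|) = (n : ℤ) + 1 ∧
        (∑ i, |p.1 i - p.2 i|) = 1}.ncard) :
    ∃ C : ℝ, 0 < C ∧ ∀ n : ℕ, 1 ≤ n →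
      |(αe n : ℝ) / Real.sqrt ((s n : ℝ) * (s (n + 1) : ℝ)) - (d : ℝ)|
        ≤ C / (n : ℝ) ^ 2 := by
  obtain ⟨e, rfl⟩ : ∃ e, d = e + 1 := ⟨d - 1, by omega⟩
  refine ⟨(e + 1) * ((2 * 5 ^ e * (e + 1) ^ e) ^ 2 + 4 * 5 ^ e * (e + 1) ^ e), by positivity,
    fun n hn => ?_⟩
  have hrec := card_sphere_succ_succ e n
  have hδ : (#(sphere (e + 1) (n + 1)) : ℝ) - #(sphere (e + 1) n) - 2 * #(sphere e n) =
      #(sphere e (n + 1)) - #(sphere e n) := by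
    rw [hrec]
    push_cast
    ring
  have hbound := abs_div_sqrt_mul_sub_one_le_of_bounds
    (A := #(sphere (e + 1) n)) (P := #(sphere e n)) (B := #(sphere (e + 1) (n + 1))) (n := n)
    (c₁ := 2 * 5 ^ e * (e + 1) ^ e) (c₂ := 4 * 5 ^ e * (e + 1) ^ e)
    (by exact_mod_cast card_sphere_succ_pos e n) (by positivity)
    (by exact_mod_cast (by omega : #(sphere (e + 1) n) ≤ #(sphere (e + 1) (n + 1))))
    (by positivity) (by exact_mod_cast mul_card_sphere_le_card_sphere_succ hn)
    (by rw [hδ]; exact sq_mul_abs_card_sphere_succ_sub_le hn)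
  rw [hαdef, ncard_setOf_edges, card_edges, hsdef, hsdef, ncard_setOf_l1_eq, ncard_setOf_l1_eq]
  push_cast
  rw [mul_div_assoc, ← mul_sub_one, abs_mul, abs_of_pos (by positivity), mul_div_assoc]
  exact mul_le_mul_of_nonneg_left hbound (by positivity)
end
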